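/- arXiv:2006.05917 — 7 statements merged into one kernel-verified Lean document; each statement's English description precedes it below -/
import Mathlib

section
/- For every β ∈ ℝ, E[exp(iβX − iβY + (β²/2)E[X²] + (β²/2)E[Y²]) · Z] = iβ · exp(β² E[XY]) · (E[XZ] − E[YZ]), where i is the imaginary unit and the expectation is that of a complex-valued integrable random variable. -/
/-!
For `W_t = βX - βY + tZ`, which is centered Gaussian for every `t`, the characteristic function
gives `E[exp(i W_t)] = exp(-E[W_t²]/2)`, and `E[W_t²]` is a quadratic polynomial in `t`.
Differentiating both sides at `t = 0` (dominated convergence on the left, with bound `|Z|`)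
yields the Gaussian integration by parts formula `E[Z exp(i W_0)] = i E[W_0 Z] exp(-E[W_0²]/2)`;
expanding the second moments of `W_0` in terms of those of `X, Y, Z` gives the identity.
-/

open MeasureTheory ProbabilityTheory Complex

lemma integral_sq_gaussianReal_zero (v : NNReal) : ∫ x, x ^ 2 ∂gaussianReal 0 v = v := by
  have h := variance_eq_integral (μ := gaussianReal 0 v) aemeasurable_id
  simp only [variance_id_gaussianReal, id_eq, integral_id_gaussianReal, sub_zero] at h
  exact h.symm

section GaussianLaw

variable {Ω : Type*} [MeasurableSpace Ω] {P : Measure Ω} {f : Ω → ℝ} {μ : ℝ} {v : NNReal}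

lemma hasLaw_of_map_eq_gaussianReal (h : P.map f = gaussianReal μ v) :
    HasLaw f (gaussianReal μ v) P :=
  ⟨aemeasurable_of_map_neZero (by rw [h]; infer_instance), h⟩

lemma memLp_of_map_eq_gaussianReal (h : P.map f = gaussianReal μ v) {p : ENNReal} (hp : p ≠ ⊤) :
    MemLp f p P := by
  have hf := hasLaw_of_map_eq_gaussianReal h
  rw [← Function.id_comp f, ← memLp_map_measure_iff aestronglyMeasurable_id hf.aemeasurable, h]
  exact memLp_id_gaussianReal' p hp

lemma integral_sq_of_map_eq_gaussianReal (h : P.map f = gaussianReal 0 v) :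
    ∫ ω, f ω ^ 2 ∂P = v := by
  rw [← integral_sq_gaussianReal_zero v]
  exact (hasLaw_of_map_eq_gaussianReal h).integral_comp (f := fun x : ℝ => x ^ 2) (by fun_prop)

lemma integral_cexp_I_mul_of_map_eq_gaussianReal (h : P.map f = gaussianReal 0 v) :
    ∫ ω, cexp (I * f ω) ∂P = cexp (-(∫ ω, f ω ^ 2 ∂P : ℝ) / 2) := by
  rw [integral_sq_of_map_eq_gaussianReal h, ← complexMGF, complexMGF_gaussianReal h]
  congr 1
  simp

end GaussianLaw

section SecondMoments

variable {Ω : Type*} [MeasurableSpace Ω] {P : Measure Ω} {U V T : Ω → ℝ}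

lemma integral_add_mul_mul (hU : MemLp U 2 P) (hV : MemLp V 2 P) (hT : MemLp T 2 P) (a b : ℝ) :
    ∫ ω, (a * U ω + b * V ω) * T ω ∂P = a * ∫ ω, U ω * T ω ∂P + b * ∫ ω, V ω * T ω ∂P := by
  have hUT : Integrable (fun ω => U ω * T ω) P := hU.integrable_mul hT
  have hVT : Integrable (fun ω => V ω * T ω) P := hV.integrable_mul hT
  simp_rw [add_mul, mul_assoc]
  rw [integral_add (hUT.const_mul a) (hVT.const_mul b), integral_const_mul, integral_const_mul]

lemma integral_add_mul_sq (hU : MemLp U 2 P) (hV : MemLp V 2 P) (a b : ℝ) :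
    ∫ ω, (a * U ω + b * V ω) ^ 2 ∂P
      = a ^ 2 * ∫ ω, U ω ^ 2 ∂P + 2 * a * b * ∫ ω, U ω * V ω ∂P + b ^ 2 * ∫ ω, V ω ^ 2 ∂P := by
  have hUU : Integrable (fun ω => U ω ^ 2) P := hU.integrable_sq
  have hUV : Integrable (fun ω => U ω * V ω) P := hU.integrable_mul hV
  have hVV : Integrable (fun ω => V ω ^ 2) P := hV.integrable_sq
  calc ∫ ω, (a * U ω + b * V ω) ^ 2 ∂P
      = ∫ ω, a ^ 2 * U ω ^ 2 + 2 * a * b * (U ω * V ω) + b ^ 2 * V ω ^ 2 ∂P := by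
        congr with ω; ring
    _ = _ := by
        have hUUV : Integrable (fun ω => a ^ 2 * U ω ^ 2 + 2 * a * b * (U ω * V ω)) P :=
          (hUU.const_mul _).add (hUV.const_mul _)
        rw [integral_add hUUV (hVV.const_mul _), integral_add (hUU.const_mul _) (hUV.const_mul _),
          integral_const_mul, integral_const_mul, integral_const_mul]

end SecondMoments

lemma hasDerivAt_integral_cexp_I_mul_add_mul {Ω : Type*} [MeasurableSpace Ω] {P : Measure Ω}
    [IsFiniteMeasure P] {W Z : Ω → ℝ} (hW : AEMeasurable W P) (hZ : Integrable Z P) (t₀ : ℝ) :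
    HasDerivAt (fun t : ℝ => ∫ ω, cexp (I * ((W ω + t * Z ω : ℝ) : ℂ)) ∂P)
      (∫ ω, I * Z ω * cexp (I * ((W ω + t₀ * Z ω : ℝ) : ℂ)) ∂P) t₀ := by
  have hZ_meas := hZ.aemeasurable
  refine (hasDerivAt_integral_of_dominated_loc_of_deriv_le (bound := fun ω => |Z ω|)
    (F' := fun t ω => I * Z ω * cexp (I * ((W ω + t * Z ω : ℝ) : ℂ)))
    Filter.univ_mem (.of_forall fun t => by fun_prop) ?_ (by fun_prop) ?_ hZ.abs ?_).2
  · exact (integrable_const (1 : ℝ)).mono' (by fun_prop)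
      (.of_forall fun ω => (norm_exp_I_mul_ofReal _).le)
  · refine .of_forall fun ω t _ => ?_
    rw [norm_mul, norm_exp_I_mul_ofReal, norm_mul, norm_I, norm_real, mul_one, one_mul,
      Real.norm_eq_abs]
  · refine .of_forall fun ω t _ => ?_
    have hlin : HasDerivAt (fun s : ℝ => W ω + s * Z ω) (Z ω) t := by
      simpa using ((hasDerivAt_id t).mul_const (Z ω)).const_add (W ω)
    exact (hlin.ofReal_comp.const_mul I).cexp.congr_deriv (mul_comm _ _)

lemma integral_mul_cexp_I_mul_of_map_eq_gaussianReal {Ω : Type*} [MeasurableSpace Ω]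
    {P : Measure Ω} [IsFiniteMeasure P] {W Z : Ω → ℝ}
    (h : ∀ t : ℝ, ∃ v : NNReal, P.map (fun ω => W ω + t * Z ω) = gaussianReal 0 v) :
    ∫ ω, Z ω * cexp (I * W ω) ∂P
      = I * (∫ ω, W ω * Z ω ∂P : ℝ) * cexp (-(∫ ω, W ω ^ 2 ∂P : ℝ) / 2) := by
  have hL2 (t : ℝ) : MemLp (fun ω => W ω + t * Z ω) 2 P :=
    memLp_of_map_eq_gaussianReal (h t).choose_spec (by simp)
  have hW : MemLp W 2 P := by simpa using hL2 0
  have hZ : MemLp Z 2 P := by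
    convert (hL2 1).sub hW using 1
    ext ω
    simp
  set a := ∫ ω, W ω ^ 2 ∂P
  set b := ∫ ω, W ω * Z ω ∂P
  set c := ∫ ω, Z ω ^ 2 ∂P
  have hchar : (fun t : ℝ => ∫ ω, cexp (I * ((W ω + t * Z ω : ℝ) : ℂ)) ∂P)
      = fun t : ℝ => cexp (-((a + 2 * t * b + t ^ 2 * c : ℝ) : ℂ) / 2) := by
    ext t
    have hq : ∫ ω, (W ω + t * Z ω) ^ 2 ∂P = a + 2 * t * b + t ^ 2 * c := by
      simpa using integral_add_mul_sq hW hZ 1 t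
    rw [integral_cexp_I_mul_of_map_eq_gaussianReal (h t).choose_spec, hq]
  have hderiv := hasDerivAt_integral_cexp_I_mul_add_mul hW.aestronglyMeasurable.aemeasurable
    (hZ.integrable one_le_two) 0
  rw [hchar] at hderiv
  have hq : HasDerivAt (fun t : ℝ => a + 2 * t * b + t ^ 2 * c) (2 * b) 0 := by
    simpa [add_assoc] using ((((hasDerivAt_id' (0 : ℝ)).const_mul 2).mul_const b).add
      ((hasDerivAt_pow 2 (0 : ℝ)).mul_const c)).const_add a
  have hZW := hderiv.unique (hq.ofReal_comp.neg.div_const 2).cexp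
  calc ∫ ω, Z ω * cexp (I * W ω) ∂P
      = -I * ∫ ω, I * Z ω * cexp (I * ((W ω + 0 * Z ω : ℝ) : ℂ)) ∂P := by
        rw [← integral_const_mul]
        congr with ω
        simp only [zero_mul, add_zero]
        linear_combination (Z ω * cexp (I * W ω)) * I_mul_I
    _ = I * b * cexp (-a / 2) := by
        rw [hZW]
        simp only [Pi.neg_apply, mul_zero, zero_mul, add_zero, zero_pow two_ne_zero, ofReal_mul,
          ofReal_ofNat]
        ring

theorem stmt1_general {Ω : Type*} [MeasurableSpace Ω] (P : Measure Ω) [IsProbabilityMeasure P]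
    (X Y Z : Ω → ℝ)
    (hGauss : ∀ a b c : ℝ, ∃ v : NNReal,
      Measure.map (fun ω => a * X ω + b * Y ω + c * Z ω) P = gaussianReal 0 v)
    (β : ℝ) :
    ∫ ω, Complex.exp (Complex.I * β * X ω - Complex.I * β * Y ω
        + β ^ 2 / 2 * ((∫ ω', X ω' ^ 2 ∂P : ℝ) : ℂ)
        + β ^ 2 / 2 * ((∫ ω', Y ω' ^ 2 ∂P : ℝ) : ℂ)) * (Z ω : ℂ) ∂P
      = Complex.I * β * Complex.exp (β ^ 2 * ((∫ ω', X ω' * Y ω' ∂P : ℝ) : ℂ))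
        * (((∫ ω', X ω' * Z ω' ∂P : ℝ) : ℂ) - ((∫ ω', Y ω' * Z ω' ∂P : ℝ) : ℂ)) := by
  have hL2 (a b c : ℝ) : MemLp (fun ω => a * X ω + b * Y ω + c * Z ω) 2 P :=
    memLp_of_map_eq_gaussianReal (hGauss a b c).choose_spec (by simp)
  have hX : MemLp X 2 P := by simpa using hL2 1 0 0
  have hY : MemLp Y 2 P := by simpa using hL2 0 1 0
  have hZ : MemLp Z 2 P := by simpa using hL2 0 0 1
  have key := integral_mul_cexp_I_mul_of_map_eq_gaussianReal
    (W := fun ω => β * X ω + -β * Y ω) (hGauss β (-β))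
  rw [integral_add_mul_sq hX hY, integral_add_mul_mul hX hY hZ] at key
  calc _ = cexp (β ^ 2 / 2 * ((∫ ω', X ω' ^ 2 ∂P : ℝ) : ℂ)
          + β ^ 2 / 2 * ((∫ ω', Y ω' ^ 2 ∂P : ℝ) : ℂ))
        * ∫ ω, Z ω * cexp (I * ((β * X ω + -β * Y ω : ℝ) : ℂ)) ∂P := by
        rw [← integral_const_mul]
        congr with ω
        rw [add_assoc, exp_add]
        push_cast
        ring_nf
    _ = _ := by
        rw [key, mul_left_comm, mul_assoc, ← exp_add]
        push_cast
        ring_nf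

/-- **Girsanov-type identity for centered jointly Gaussian vectors (imaginary exponential).**
If the joint law of `(X, Y, Z)` is a centered Gaussian measure on `ℝ³` (equivalently, every
linear combination `a•X + b•Y + c•Z` has a centered Gaussian law), then for every `β ∈ ℝ`,
`E[exp(iβX − iβY + (β²/2)E[X²] + (β²/2)E[Y²]) · Z] = iβ · exp(β² E[XY]) · (E[XZ] − E[YZ])`. -/
theorem stmt1 {Ω : Type*} [MeasurableSpace Ω] (P : Measure Ω) [IsProbabilityMeasure P]
    (X Y Z : Ω → ℝ) (hX : Measurable X) (hY : Measurable Y) (hZ : Measurable Z)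
    (hGauss : ∀ a b c : ℝ, ∃ v : NNReal,
      Measure.map (fun ω => a * X ω + b * Y ω + c * Z ω) P = gaussianReal 0 v)
    (β : ℝ) :
    ∫ ω, Complex.exp (Complex.I * β * X ω - Complex.I * β * Y ω
        + β ^ 2 / 2 * ((∫ ω', X ω' ^ 2 ∂P : ℝ) : ℂ)
        + β ^ 2 / 2 * ((∫ ω', Y ω' ^ 2 ∂P : ℝ) : ℂ)) * (Z ω : ℂ) ∂P
      = Complex.I * β * Complex.exp (β ^ 2 * ((∫ ω', X ω' * Y ω' ∂P : ℝ) : ℂ))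
        * (((∫ ω', X ω' * Z ω' ∂P : ℝ) : ℂ) - ((∫ ω', Y ω' * Z ω' ∂P : ℝ) : ℂ)) :=
  stmt1_general P X Y Z hGauss β
end

section
/- There exists a constant c > 0 (depending only on d, g and K) such that for all η ∈ (0, δ), all u, v ∈ ℝ^d with |u| ≤ 1 and |v| ≤ 1, and all x, y ∈ K with |x − y| > 10η, the second-order difference satisfies |C(x,y) + C(x − ηu, y − ηv) − C(x − ηu, y) − C(x, y − ηv)| ≤ c η² / |x − y|². -/
/-!
Write `C(x, y) = g(x, y) - log ‖x - y‖`. If the derivative of `f` is `M`-Lipschitz on a convex set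
containing the four corners `p, p - w₁, p - w₂, p - w₁ - w₂`, the mean value theorem applied to
`z ↦ f z - f (z - w₂)` bounds the mixed difference of `f` by `M ‖w₁‖ ‖w₂‖`. For `g`, `M` bounds
its second derivative on the compact set `K_δ × K_δ`, and `η² ≤ (diam K)² η² / |x - y|²`.
For `log ‖·‖` the gradient `z / ‖z‖²` is inversion in the unit sphere, which scales the distance
between `a` and `b` by `1 / (‖a‖ ‖b‖)`; on the ball of radius `|x - y| / 2` around `x - y` this
gives `M = 4 / |x - y|²`.
-/

open Set Metric

theorem abs_mixed_diff_le_of_lipschitz_fderiv {F : Type*} [NormedAddCommGroup F]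
    [NormedSpace ℝ F] {f : F → ℝ} {f' : F → F →L[ℝ] ℝ} {s : Set F} (hs : Convex ℝ s)
    (hf : ∀ z ∈ s, HasFDerivWithinAt f (f' z) s z) {M : ℝ}
    (hf' : ∀ a ∈ s, ∀ b ∈ s, ‖f' a - f' b‖ ≤ M * ‖a - b‖) {p w₁ w₂ : F}
    (h₀ : p ∈ s) (h₁ : p - w₁ ∈ s) (h₂ : p - w₂ ∈ s) (h₁₂ : p - w₁ - w₂ ∈ s) :
    |f p + f (p - w₁ - w₂) - f (p - w₁) - f (p - w₂)| ≤ M * ‖w₁‖ * ‖w₂‖ := by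
  set I := segment ℝ (p - w₁) p
  have hI : ∀ z ∈ I, z ∈ s ∧ z - w₂ ∈ s := by
    intro z hz
    refine ⟨hs.segment_subset h₁ h₀ hz, hs.segment_subset h₁₂ h₂ ?_⟩
    convert (mem_segment_translate ℝ (-w₂)).2 hz using 1 <;> abel_nf
  have hderiv : ∀ z ∈ I,
      HasFDerivWithinAt (fun z => f z - f (z - w₂)) (f' z - f' (z - w₂)) I z := by
    intro z hz
    have hsub : I ⊆ s := hs.segment_subset h₁ h₀
    refine ((hf z (hI z hz).1).mono hsub).sub ?_
    exact ((hf _ (hI z hz).2).comp z ((hasFDerivWithinAt_id z I).sub_const w₂)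
      (fun y hy => (hI y hy).2))
  have hbound : ∀ z ∈ I, ‖f' z - f' (z - w₂)‖ ≤ M * ‖w₂‖ := fun z hz => by
    simpa using hf' z (hI z hz).1 _ (hI z hz).2
  have := (convex_segment _ _).norm_image_sub_le_of_norm_hasFDerivWithin_le hderiv hbound
    (left_mem_segment ℝ _ _) (right_mem_segment ℝ _ _)
  rw [sub_sub_cancel, Real.norm_eq_abs] at this
  calc |f p + f (p - w₁ - w₂) - f (p - w₁) - f (p - w₂)|
      = |f p - f (p - w₂) - (f (p - w₁) - f (p - w₁ - w₂))| := by ring_nf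
    _ ≤ M * ‖w₂‖ * ‖w₁‖ := this
    _ = M * ‖w₁‖ * ‖w₂‖ := mul_right_comm _ _ _

section LogNorm

variable {E : Type*} [NormedAddCommGroup E] [InnerProductSpace ℝ E]

theorem hasFDerivAt_log_norm {z : E} (hz : z ≠ 0) :
    HasFDerivAt (fun w : E => Real.log ‖w‖) (innerSL ℝ ((1 / ‖z‖) ^ 2 • z)) z := by
  have := (((hasStrictFDerivAt_norm_sq z).hasFDerivAt.log (by positivity)).const_mul (1 / 2 : ℝ))
  have hlog : (fun w : E => Real.log ‖w‖) = fun w => 1 / 2 * Real.log (‖w‖ ^ 2) := by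
    funext w; rw [Real.log_pow]; push_cast; ring
  rw [hlog]
  refine this.congr_fderiv ?_
  ext w
  simp only [one_div, smul_apply, coe_innerSL_apply, nsmul_eq_mul,
    Nat.cast_ofNat, smul_eq_mul, inv_pow, map_smul]
  field_simp

theorem norm_innerSL_div_norm_sq_smul_sub_le {a b : E} {ρ : ℝ} (hρ : 0 < ρ) (ha : ρ ≤ ‖a‖)
    (hb : ρ ≤ ‖b‖) :
    ‖innerSL ℝ ((1 / ‖a‖) ^ 2 • a) - innerSL ℝ ((1 / ‖b‖) ^ 2 • b)‖ ≤ (ρ ^ 2)⁻¹ * ‖a - b‖ := by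
  have ha0 : a ≠ 0 := norm_pos_iff.mp (hρ.trans_le ha)
  have hb0 : b ≠ 0 := norm_pos_iff.mp (hρ.trans_le hb)
  rw [← map_sub, innerSL_apply_norm, ← dist_eq_norm, dist_div_norm_sq_smul ha0 hb0,
    ← dist_eq_norm, one_pow, one_div]
  gcongr
  nlinarith [mul_le_mul ha hb hρ.le (norm_nonneg a)]

theorem abs_mixed_diff_log_norm_le {z w₁ w₂ : E} (hz : z ≠ 0) (h₁ : ‖w₁‖ ≤ ‖z‖ / 4)
    (h₂ : ‖w₂‖ ≤ ‖z‖ / 4) :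
    |Real.log ‖z‖ + Real.log ‖z - w₁ - w₂‖ - Real.log ‖z - w₁‖ - Real.log ‖z - w₂‖|
      ≤ 4 / ‖z‖ ^ 2 * ‖w₁‖ * ‖w₂‖ := by
  have hz0 : 0 < ‖z‖ := norm_pos_iff.mpr hz
  have hball : ∀ a ∈ closedBall z (‖z‖ / 2), ‖z‖ / 2 ≤ ‖a‖ := fun a ha => by
    rw [mem_closedBall, dist_eq_norm] at ha
    linarith [norm_sub_norm_le z a, norm_sub_rev z a]
  have hmem : ∀ w, ‖w‖ ≤ ‖z‖ / 2 → z - w ∈ closedBall z (‖z‖ / 2) := fun w hw => by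
    rwa [mem_closedBall, dist_eq_norm, sub_sub_cancel_left, norm_neg]
  have h4 : (4 : ℝ) / ‖z‖ ^ 2 = ((‖z‖ / 2) ^ 2)⁻¹ := by field_simp; norm_num
  rw [h4]
  refine abs_mixed_diff_le_of_lipschitz_fderiv (convex_closedBall z _)
    (fun a ha => (hasFDerivAt_log_norm ?_).hasFDerivWithinAt)
    (fun a ha b hb =>
      norm_innerSL_div_norm_sq_smul_sub_le (by positivity) (hball a ha) (hball b hb))
    (mem_closedBall_self (by positivity)) (hmem _ (by linarith)) (hmem _ (by linarith)) ?_
  · exact norm_pos_iff.mp ((half_pos hz0).trans_le (hball a ha))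
  · rw [sub_sub]
    exact hmem _ ((norm_add_le _ _).trans (by linarith))

theorem abs_mixed_diff_log_dist_le {x y a b : E} (hxy : x ≠ y) (ha : ‖a‖ ≤ dist x y / 4)
    (hb : ‖b‖ ≤ dist x y / 4) :
    |Real.log (dist x y) + Real.log (dist (x - a) (y - b)) - Real.log (dist (x - a) y)
      - Real.log (dist x (y - b))| ≤ 4 / dist x y ^ 2 * ‖a‖ * ‖b‖ := by
  rw [dist_eq_norm] at ha hb
  have := abs_mixed_diff_log_norm_le (w₁ := a) (w₂ := -b) (sub_ne_zero.mpr hxy) ha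
    (by rwa [norm_neg])
  rw [norm_neg, show x - y - a - -b = x - a - (y - b) by abel, show x - y - a = x - a - y by abel,
    show x - y - -b = x - (y - b) by abel] at this
  simpa only [← dist_eq_norm] using this

end LogNorm

theorem ContDiffOn.exists_abs_mixed_diff_le {F : Type*} [NormedAddCommGroup F]
    [NormedSpace ℝ F] {f : F → ℝ} {U K : Set F} (hf : ContDiffOn ℝ 2 f U) (hU : IsOpen U)
    (hK : IsCompact K) (hKU : K ⊆ U) :
    ∃ M ≥ 0, ∀ s ⊆ K, Convex ℝ s → ∀ p w₁ w₂ : F, p ∈ s → p - w₁ ∈ s → p - w₂ ∈ s →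
      p - w₁ - w₂ ∈ s → |f p + f (p - w₁ - w₂) - f (p - w₁) - f (p - w₂)| ≤ M * ‖w₁‖ * ‖w₂‖ := by
  have hf' : ContDiffOn ℝ 1 (fderiv ℝ f) U := hf.fderiv_of_isOpen hU (by norm_num)
  obtain ⟨M, hM⟩ := hK.exists_bound_of_continuousOn
    ((hf'.continuousOn_fderiv_of_isOpen hU le_rfl).mono hKU)
  refine ⟨max M 0, le_max_right _ _, fun s hsK hs p w₁ w₂ h₀ h₁ h₂ h₁₂ => ?_⟩
  have hU' : ∀ z ∈ s, U ∈ nhds z := fun z hz => hU.mem_nhds (hKU (hsK hz))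
  refine abs_mixed_diff_le_of_lipschitz_fderiv hs
    (fun z hz => ((hf.differentiableOn (by norm_num)).hasFDerivAt (hU' z hz)).hasFDerivWithinAt)
    (fun a ha b hb => ?_) h₀ h₁ h₂ h₁₂
  exact hs.norm_image_sub_le_of_norm_hasFDerivWithin_le
    (fun z hz => ((hf'.differentiableOn one_ne_zero).hasFDerivAt (hU' z hz)).hasFDerivWithinAt)
    (fun z hz => (hM z (hsK hz)).trans (le_max_left _ _)) hb ha

theorem ContDiffOn.exists_abs_mixed_diff_uncurry_le {F : Type*} [NormedAddCommGroup F]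
    [NormedSpace ℝ F] [ProperSpace F] {g : F → F → ℝ} {U K : Set F} {δ : ℝ}
    (hg : ContDiffOn ℝ 2 (fun p : F × F => g p.1 p.2) (U ×ˢ U)) (hU : IsOpen U)
    (hK : IsCompact K) (hKU : cthickening δ K ⊆ U) :
    ∃ M ≥ 0, ∀ x ∈ K, ∀ y ∈ K, ∀ a b : F, ‖a‖ ≤ δ → ‖b‖ ≤ δ →
      |g x y + g (x - a) (y - b) - g (x - a) y - g x (y - b)| ≤ M * ‖a‖ * ‖b‖ := by
  obtain ⟨M, hM0, hM⟩ := hg.exists_abs_mixed_diff_le (hU.prod hU)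
    (hK.cthickening.prod hK.cthickening) (prod_mono hKU hKU)
  refine ⟨M, hM0, fun x hx y hy a b ha hb => ?_⟩
  have hδ : 0 ≤ δ := (norm_nonneg a).trans ha
  have hball : ∀ c w : F, ‖w‖ ≤ δ → c - w ∈ closedBall c δ := fun c w hw => by
    rwa [mem_closedBall, dist_eq_norm, sub_sub_cancel_left, norm_neg]
  have h0 : ‖(0 : F)‖ ≤ δ := by simpa using hδ
  have := hM (closedBall x δ ×ˢ closedBall y δ)
    (prod_mono (closedBall_subset_cthickening hx δ) (closedBall_subset_cthickening hy δ))
    ((convex_closedBall x δ).prod (convex_closedBall y δ)) (x, y) (a, 0) (0, b)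
    ⟨mem_closedBall_self hδ, mem_closedBall_self hδ⟩ ⟨hball _ _ ha, hball _ _ h0⟩
    ⟨hball _ _ h0, hball _ _ hb⟩ ⟨by simpa using hball x _ ha, by simpa using hball y _ hb⟩
  simpa only [Prod.mk_sub_mk, sub_zero, Prod.norm_mk, norm_zero, max_eq_left (norm_nonneg _),
    max_eq_right (norm_nonneg _)] using this

theorem stmt2_general (d : ℕ)
    (U : Set (EuclideanSpace ℝ (Fin d))) (hU : IsOpen U)
    (g : EuclideanSpace ℝ (Fin d) → EuclideanSpace ℝ (Fin d) → ℝ)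
    (hg : ContDiffOn ℝ 2
      (fun p : EuclideanSpace ℝ (Fin d) × EuclideanSpace ℝ (Fin d) => g p.1 p.2) (U ×ˢ U))
    (C : EuclideanSpace ℝ (Fin d) → EuclideanSpace ℝ (Fin d) → ℝ)
    (hC : ∀ x y, C x y = Real.log (1 / dist x y) + g x y)
    (K : Set (EuclideanSpace ℝ (Fin d))) (hK : IsCompact K)
    (δ : ℝ) (hδ0 : 0 < δ)
    (hδU : ∀ x ∈ K, ∀ z : EuclideanSpace ℝ (Fin d), dist z x < 3 * δ → z ∈ U) :
    ∃ c > 0, ∀ η ∈ Set.Ioo (0:ℝ) δ, ∀ u v : EuclideanSpace ℝ (Fin d),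
      ‖u‖ ≤ 1 → ‖v‖ ≤ 1 → ∀ x ∈ K, ∀ y ∈ K, 10 * η < dist x y →
      |C x y + C (x - η • u) (y - η • v) - C (x - η • u) y - C x (y - η • v)|
        ≤ c * η ^ 2 / dist x y ^ 2 := by
  have hKδ : cthickening δ K ⊆ U := fun z hz => by
    obtain ⟨x, hx, hzx⟩ := mem_thickening_iff.mp
      (cthickening_subset_thickening' (δ₂ := 3 * δ) (by positivity) (by linarith) K hz)
    exact hδU x hx z hzx
  obtain ⟨M, hM0, hM⟩ := hg.exists_abs_mixed_diff_uncurry_le hU hK hKδ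
  refine ⟨4 + M * diam K ^ 2, by positivity, ?_⟩
  rintro η ⟨hη0, hηδ⟩ u v hu hv x hx y hy hxy
  have hr : 0 < dist x y := by linarith
  have hηu : ‖η • u‖ ≤ η := by rw [norm_smul_of_nonneg hη0.le]; nlinarith [norm_nonneg u]
  have hηv : ‖η • v‖ ≤ η := by rw [norm_smul_of_nonneg hη0.le]; nlinarith [norm_nonneg v]
  have hlog := (abs_mixed_diff_log_dist_le (dist_pos.mp hr) (by linarith) (by linarith)).trans
    (by gcongr : 4 / dist x y ^ 2 * ‖η • u‖ * ‖η • v‖ ≤ 4 / dist x y ^ 2 * η * η)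
  have hker := (hM x hx y hy _ _ (hηu.trans hηδ.le) (hηv.trans hηδ.le)).trans
    (by gcongr : M * ‖η • u‖ * ‖η • v‖ ≤ M * η * η)
  have hdiam : dist x y ^ 2 ≤ diam K ^ 2 :=
    pow_le_pow_left₀ hr.le (dist_le_diam_of_mem hK.isBounded hx hy) 2
  calc _ ≤ 4 / dist x y ^ 2 * η * η + M * η * η := by
        simp only [hC, one_div, Real.log_inv, abs_le] at hlog hker ⊢
        constructor <;> linarith
    _ ≤ (4 + M * diam K ^ 2) * η ^ 2 / dist x y ^ 2 := by
        rw [add_mul, add_div]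
        gcongr
        · exact le_of_eq (by ring)
        · rw [le_div_iff₀ (by positivity)]
          nlinarith [mul_le_mul_of_nonneg_left hdiam (mul_nonneg hM0 (sq_nonneg η))]

/-- **Second-order difference bound for the log-correlated kernel.**
With `C(x,y) = log(1/|x−y|) + g(x,y)` for `g ∈ C²(U × U)`, `K ⊆ U` compact and
`δ = min(1, dist(K, Uᶜ)/3)` (encoded by `0 < δ ≤ 1` and `ball(x, 3δ) ⊆ U` for `x ∈ K`),
there is `c > 0` so that for all `η ∈ (0,δ)`, `|u|,|v| ≤ 1` and `x, y ∈ K` with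
`|x−y| > 10η`, `|C(x,y) + C(x−ηu, y−ηv) − C(x−ηu, y) − C(x, y−ηv)| ≤ c η²/|x−y|²`. -/
theorem stmt2 (d : ℕ) (hd : 2 ≤ d)
    (U : Set (EuclideanSpace ℝ (Fin d))) (hU : IsOpen U)
    (g : EuclideanSpace ℝ (Fin d) → EuclideanSpace ℝ (Fin d) → ℝ)
    (hg : ContDiffOn ℝ 2
      (fun p : EuclideanSpace ℝ (Fin d) × EuclideanSpace ℝ (Fin d) => g p.1 p.2) (U ×ˢ U))
    (C : EuclideanSpace ℝ (Fin d) → EuclideanSpace ℝ (Fin d) → ℝ)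
    (hC : ∀ x y, C x y = Real.log (1 / dist x y) + g x y)
    (K : Set (EuclideanSpace ℝ (Fin d))) (hK : IsCompact K) (hKne : K.Nonempty) (hKU : K ⊆ U)
    (δ : ℝ) (hδ0 : 0 < δ) (hδ1 : δ ≤ 1)
    (hδU : ∀ x ∈ K, ∀ z : EuclideanSpace ℝ (Fin d), dist z x < 3 * δ → z ∈ U) :
    ∃ c > 0, ∀ η ∈ Set.Ioo (0:ℝ) δ, ∀ u v : EuclideanSpace ℝ (Fin d),
      ‖u‖ ≤ 1 → ‖v‖ ≤ 1 → ∀ x ∈ K, ∀ y ∈ K, 10 * η < dist x y →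
      |C x y + C (x - η • u) (y - η • v) - C (x - η • u) y - C x (y - η • v)|
        ≤ c * η ^ 2 / dist x y ^ 2 :=
  stmt2_general d U hU g hg C hC K hK δ hδ0 hδU
end

section
/- For every β > 0 there exists a constant c > 0 (depending only on d, g, K and β) such that for all η ∈ (0, δ), all u, v ∈ ℝ^d with |u| ≤ 1 and |v| ≤ 1, and all x, y ∈ K with |x − y| > 10η, one has |exp(β²(C(x,y) + C(x − ηu, y − ηv) − C(x − ηu, y) − C(x, y − ηv))) − 1| ≤ c η² / |x − y|². -/
/-!
Write `Δ_{a,b} F = F x y - F (x - a) y - F x (y - b) + F (x - a) (y - b)`. For `F` of class `C²`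
along the rectangle `(s, t) ↦ (x - s a, y - t b)`, `s, t ∈ [0, 1]`, two applications of the mean
value inequality bound `|Δ_{a,b} F|` by `‖a‖ ‖b‖` times the supremum of the mixed second derivative
on the rectangle. For `g` this supremum is bounded on the compact `δ`-thickening of `K`, which lies
in `U`, so `|Δ g| ≤ M η² ≤ M (diam K)² η² / |x - y|²`. For `log (1 / |x - y|)` the mixed derivative
is `O(1 / |x - y - s a + t b|²)`, and `|x - y| > 10 η` keeps the rectangle at distance
`≥ 4/5 |x - y|` from the singularity, so `|Δ log| ≤ 5 η² / |x - y|²`. Finally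
`|e^z - 1| ≤ |z| e^{|z|}` with `|z| = β² |Δ C| = O(η² / |x - y|²)` and `η² / |x - y|² ≤ 1/100`.
-/

open Set Metric

theorem abs_exp_sub_one_le_abs_mul_exp_abs (x : ℝ) : |Real.exp x - 1| ≤ |x| * Real.exp |x| := by
  rcases le_or_gt 0 x with hx | hx
  · have e1 : Real.exp (-x) * Real.exp x = 1 := by rw [← Real.exp_add]; simp
    rw [abs_of_nonneg hx, abs_of_nonneg (by linarith [Real.one_le_exp hx] : (0:ℝ) ≤ Real.exp x - 1)]
    nlinarith [Real.add_one_le_exp (-x), Real.exp_pos x]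
  · rw [abs_of_neg hx, abs_of_nonpos (by simp [Real.exp_le_one_iff.2 hx.le] : Real.exp x - 1 ≤ 0)]
    nlinarith [Real.add_one_le_exp x, Real.exp_pos (-x), Real.one_le_exp (by linarith : (0:ℝ) ≤ -x)]

theorem abs_exp_sub_one_le_mul_exp_of_abs_le {x A : ℝ} (h : |x| ≤ A) :
    |Real.exp x - 1| ≤ A * Real.exp A :=
  (abs_exp_sub_one_le_abs_mul_exp_abs x).trans <|
    mul_le_mul h (Real.exp_le_exp.2 h) (Real.exp_pos _).le ((abs_nonneg x).trans h)

theorem abs_sub_sub_add_le_of_mixed_deriv {f ft fst : ℝ → ℝ → ℝ} {M : ℝ}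
    (hft : ∀ s ∈ Icc (0 : ℝ) 1, ∀ t ∈ Icc (0 : ℝ) 1,
      HasDerivWithinAt (f s) (ft s t) (Icc 0 1) t)
    (hfst : ∀ s ∈ Icc (0 : ℝ) 1, ∀ t ∈ Icc (0 : ℝ) 1,
      HasDerivWithinAt (ft · t) (fst s t) (Icc 0 1) s)
    (hM : ∀ s ∈ Icc (0 : ℝ) 1, ∀ t ∈ Icc (0 : ℝ) 1, |fst s t| ≤ M) :
    |f 0 0 - f 1 0 - f 0 1 + f 1 1| ≤ M := by
  have h0 : (0 : ℝ) ∈ Icc (0 : ℝ) 1 := left_mem_Icc.2 zero_le_one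
  have h1 : (1 : ℝ) ∈ Icc (0 : ℝ) 1 := right_mem_Icc.2 zero_le_one
  have hft_diff : ∀ t ∈ Icc (0 : ℝ) 1, ‖ft 1 t - ft 0 t‖ ≤ M := fun t ht =>
    (convex_Icc 0 1).norm_image_sub_le_of_norm_hasDerivWithin_le
      (fun s hs => hfst s hs t ht) (fun s hs => hM s hs t ht) h0 h1 |>.trans_eq (by simp)
  have := (convex_Icc 0 1).norm_image_sub_le_of_norm_hasDerivWithin_le
    (fun t ht => (hft 1 h1 t ht).sub (hft 0 h0 t ht)) hft_diff h0 h1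
  simp only [Real.norm_eq_abs, Pi.sub_apply, sub_zero, abs_one, mul_one] at this
  rwa [show f 0 0 - f 1 0 - f 0 1 + f 1 1 = f 1 1 - f 0 1 - (f 1 0 - f 0 0) by ring]

section SecondDifference

variable {E : Type*} [NormedAddCommGroup E] [NormedSpace ℝ E]

theorem abs_second_diff_le_of_norm_fderiv_fderiv_le {G : E → ℝ} {V : Set E} (hV : IsOpen V)
    (hG : ContDiffOn ℝ 2 G V) {M : ℝ} {w p q : E}
    (hV_mem : ∀ s ∈ Icc (0 : ℝ) 1, ∀ t ∈ Icc (0 : ℝ) 1, w - s • p - t • q ∈ V)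
    (hM : ∀ s ∈ Icc (0 : ℝ) 1, ∀ t ∈ Icc (0 : ℝ) 1,
      ‖fderiv ℝ (fderiv ℝ G) (w - s • p - t • q)‖ ≤ M) :
    |G w - G (w - p) - G (w - q) + G (w - p - q)| ≤ M * ‖p‖ * ‖q‖ := by
  have hG_at : ∀ s ∈ Icc (0 : ℝ) 1, ∀ t ∈ Icc (0 : ℝ) 1,
      ContDiffAt ℝ 2 G (w - s • p - t • q) := fun s hs t ht =>
    hG.contDiffAt (hV.mem_nhds (hV_mem s hs t ht))
  have hpath_t (s t : ℝ) : HasDerivAt (fun t' : ℝ => w - s • p - t' • q) (-q) t := by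
    simpa using ((hasDerivAt_id t).smul_const q).const_sub (w - s • p)
  have hpath_s (s t : ℝ) : HasDerivAt (fun s' : ℝ => w - s' • p - t • q) (-p) s := by
    simpa using (((hasDerivAt_id s).smul_const p).const_sub w).sub_const (t • q)
  have hft : ∀ s ∈ Icc (0 : ℝ) 1, ∀ t ∈ Icc (0 : ℝ) 1,
      HasDerivWithinAt (fun t' => G (w - s • p - t' • q))
        (fderiv ℝ G (w - s • p - t • q) (-q)) (Icc 0 1) t := fun s hs t ht =>
    (((hG_at s hs t ht).differentiableAt (by norm_num)).hasFDerivAt.comp_hasDerivAt t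
      (hpath_t s t)).hasDerivWithinAt
  have hfst : ∀ s ∈ Icc (0 : ℝ) 1, ∀ t ∈ Icc (0 : ℝ) 1,
      HasDerivWithinAt (fun s' => fderiv ℝ G (w - s' • p - t • q) (-q))
        (fderiv ℝ (fderiv ℝ G) (w - s • p - t • q) (-p) (-q)) (Icc 0 1) s := by
    intro s hs t ht
    have hG' : HasFDerivAt (fderiv ℝ G) (fderiv ℝ (fderiv ℝ G) (w - s • p - t • q))
        (w - s • p - t • q) :=
      (((hG_at s hs t ht).fderiv_right (m := 1) (by norm_num)).differentiableAt
        (by norm_num)).hasFDerivAt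
    have h := hG'.comp_hasDerivAt s (hpath_s s t)
    simpa using (h.clm_apply (hasDerivAt_const s (-q))).hasDerivWithinAt
  have hbound : ∀ s ∈ Icc (0 : ℝ) 1, ∀ t ∈ Icc (0 : ℝ) 1,
      |fderiv ℝ (fderiv ℝ G) (w - s • p - t • q) (-p) (-q)| ≤ M * ‖p‖ * ‖q‖ := by
    intro s hs t ht
    calc |fderiv ℝ (fderiv ℝ G) (w - s • p - t • q) (-p) (-q)|
        ≤ ‖fderiv ℝ (fderiv ℝ G) (w - s • p - t • q)‖ * ‖-p‖ * ‖-q‖ :=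
          (Real.norm_eq_abs _).symm.trans_le (ContinuousLinearMap.le_opNorm₂ _ _ _)
      _ ≤ M * ‖p‖ * ‖q‖ := by
          rw [norm_neg, norm_neg]; gcongr; exact hM s hs t ht
  simpa using abs_sub_sub_add_le_of_mixed_deriv hft hfst hbound

theorem exists_abs_second_diff_le {G : E → ℝ} {V S : Set E} (hV : IsOpen V)
    (hG : ContDiffOn ℝ 2 G V) (hS : IsCompact S) (hSV : S ⊆ V) :
    ∃ M, 0 ≤ M ∧ ∀ w p q : E, (∀ s ∈ Icc (0 : ℝ) 1, ∀ t ∈ Icc (0 : ℝ) 1, w - s • p - t • q ∈ S) →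
      |G w - G (w - p) - G (w - q) + G (w - p - q)| ≤ M * ‖p‖ * ‖q‖ := by
  obtain ⟨M, hM⟩ := hS.exists_bound_of_continuousOn
    (((hG.fderiv_of_isOpen hV (by norm_num)).continuousOn_fderiv_of_isOpen hV le_rfl).mono hSV)
  refine ⟨max M 0, le_max_right _ _, fun w p q hS_mem => ?_⟩
  exact abs_second_diff_le_of_norm_fderiv_fderiv_le hV hG (fun s hs t ht => hSV (hS_mem s hs t ht))
    (fun s hs t ht => (hM _ (hS_mem s hs t ht)).trans (le_max_left _ _))

theorem exists_abs_mixed_diff_le {g : E → E → ℝ} {U S : Set E} (hU : IsOpen U)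
    (hg : ContDiffOn ℝ 2 (fun p : E × E => g p.1 p.2) (U ×ˢ U)) (hS : IsCompact S)
    (hSU : S ⊆ U) :
    ∃ M, 0 ≤ M ∧ ∀ x y a b : E, (∀ s ∈ Icc (0 : ℝ) 1, x - s • a ∈ S) →
      (∀ t ∈ Icc (0 : ℝ) 1, y - t • b ∈ S) →
      |g x y - g (x - a) y - g x (y - b) + g (x - a) (y - b)| ≤ M * ‖a‖ * ‖b‖ := by
  obtain ⟨M, hM0, hM⟩ := exists_abs_second_diff_le (hU.prod hU) hg (hS.prod hS) (prod_mono hSU hSU)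
  refine ⟨M, hM0, fun x y a b hxa hyb => ?_⟩
  have h := hM (x, y) (a, 0) (0, b) fun s hs t ht => by simpa using ⟨hxa s hs, hyb t ht⟩
  simpa using h

end SecondDifference

section LogNorm

variable {F : Type*} [NormedAddCommGroup F] [InnerProductSpace ℝ F]

open RealInnerProductSpace

theorem le_norm_sub_smul_sub_smul {w p q : F} {s t : ℝ} (hs : s ∈ Icc (0 : ℝ) 1)
    (ht : t ∈ Icc (0 : ℝ) 1) : ‖w‖ - ‖p‖ - ‖q‖ ≤ ‖w - s • p - t • q‖ := by
  have hsp : ‖s • p‖ ≤ ‖p‖ := by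
    rw [norm_smul, Real.norm_of_nonneg hs.1]; exact mul_le_of_le_one_left (norm_nonneg p) hs.2
  have htq : ‖t • q‖ ≤ ‖q‖ := by
    rw [norm_smul, Real.norm_of_nonneg ht.1]; exact mul_le_of_le_one_left (norm_nonneg q) ht.2
  have := norm_sub_norm_le w (s • p + t • q)
  have := norm_add_le (s • p) (t • q)
  rw [sub_sub w]
  linarith

theorem abs_log_norm_second_diff_le {w p q : F} (h : ‖p‖ + ‖q‖ < ‖w‖) :
    |Real.log ‖w‖ - Real.log ‖w - p‖ - Real.log ‖w - q‖ + Real.log ‖w - p - q‖|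
      ≤ 3 * ‖p‖ * ‖q‖ / (‖w‖ - ‖p‖ - ‖q‖) ^ 2 := by
  set ρ := ‖w‖ - ‖p‖ - ‖q‖
  have hρ : 0 < ρ := by linarith
  set z : ℝ → ℝ → F := fun s t => w - s • p - t • q
  have hz_pos : ∀ s ∈ Icc (0 : ℝ) 1, ∀ t ∈ Icc (0 : ℝ) 1, 0 < ‖z s t‖ ^ 2 := fun s hs t ht =>
    pow_pos (hρ.trans_le (le_norm_sub_smul_sub_smul hs ht)) 2
  have hz_t (s t : ℝ) : HasDerivAt (z s) (-q) t := by
    simpa using ((hasDerivAt_id t).smul_const q).const_sub (w - s • p)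
  have hz_s (s t : ℝ) : HasDerivAt (z · t) (-p) s := by
    show HasDerivAt (fun s' => w - s' • p - t • q) (-p) s
    simpa using (((hasDerivAt_id s).smul_const p).const_sub w).sub_const (t • q)
  have hft : ∀ s ∈ Icc (0 : ℝ) 1, ∀ t ∈ Icc (0 : ℝ) 1,
      HasDerivWithinAt (fun t' => Real.log (‖z s t'‖ ^ 2))
        (-2 * ⟪z s t, q⟫ / ‖z s t‖ ^ 2) (Icc 0 1) t := by
    intro s hs t ht
    refine (((hz_t s t).norm_sq.log (hz_pos s hs t ht).ne').congr_deriv ?_).hasDerivWithinAt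
    simp only [inner_neg_right]; ring
  have hfst : ∀ s ∈ Icc (0 : ℝ) 1, ∀ t ∈ Icc (0 : ℝ) 1,
      HasDerivWithinAt (fun s' => -2 * ⟪z s' t, q⟫ / ‖z s' t‖ ^ 2)
        (2 * (⟪p, q⟫ * ‖z s t‖ ^ 2 - 2 * ⟪z s t, p⟫ * ⟪z s t, q⟫) / ‖z s t‖ ^ 4) (Icc 0 1) s := by
    intro s hs t ht
    have hnum := ((hz_s s t).inner ℝ (hasDerivAt_const s q)).const_mul (-2 : ℝ)
    refine ((hnum.div (hz_s s t).norm_sq (hz_pos s hs t ht).ne').congr_deriv ?_).hasDerivWithinAt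
    have := (hz_pos s hs t ht).ne'
    simp only [inner_zero_right, inner_neg_left, inner_neg_right, zero_add]
    field_simp
  have hbound : ∀ s ∈ Icc (0 : ℝ) 1, ∀ t ∈ Icc (0 : ℝ) 1,
      |2 * (⟪p, q⟫ * ‖z s t‖ ^ 2 - 2 * ⟪z s t, p⟫ * ⟪z s t, q⟫) / ‖z s t‖ ^ 4|
        ≤ 6 * ‖p‖ * ‖q‖ / ρ ^ 2 := by
    intro s hs t ht
    set L := ‖z s t‖
    have hL : ρ ≤ L := le_norm_sub_smul_sub_smul hs ht
    have hL0 : 0 < L := hρ.trans_le hL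
    have hnum : |⟪p, q⟫ * L ^ 2 - 2 * ⟪z s t, p⟫ * ⟪z s t, q⟫| ≤ 3 * ‖p‖ * ‖q‖ * L ^ 2 := by
      have h1 := abs_real_inner_le_norm p q
      have h2 := abs_real_inner_le_norm (z s t) p
      have h3 := abs_real_inner_le_norm (z s t) q
      calc _ ≤ |⟪p, q⟫ * L ^ 2| + |2 * ⟪z s t, p⟫ * ⟪z s t, q⟫| := abs_sub _ _
        _ = |⟪p, q⟫| * L ^ 2 + 2 * (|⟪z s t, p⟫| * |⟪z s t, q⟫|) := by
            simp only [abs_mul, abs_two, abs_pow, abs_of_pos hL0]; ring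
        _ ≤ ‖p‖ * ‖q‖ * L ^ 2 + 2 * ((L * ‖p‖) * (L * ‖q‖)) := by gcongr
        _ = 3 * ‖p‖ * ‖q‖ * L ^ 2 := by ring
    calc _ = 2 * |⟪p, q⟫ * L ^ 2 - 2 * ⟪z s t, p⟫ * ⟪z s t, q⟫| / L ^ 4 := by
          rw [abs_div, abs_mul, abs_two, abs_of_pos (pow_pos hL0 4)]
      _ ≤ 2 * (3 * ‖p‖ * ‖q‖ * L ^ 2) / L ^ 4 := by gcongr
      _ = 6 * ‖p‖ * ‖q‖ / L ^ 2 := by field_simp; ring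
      _ ≤ 6 * ‖p‖ * ‖q‖ / ρ ^ 2 := by gcongr
  have key := abs_sub_sub_add_le_of_mixed_deriv hft hfst hbound
  simp only [z, zero_smul, one_smul, sub_zero, Real.log_pow, Nat.cast_ofNat] at key
  rw [show (2 : ℝ) * Real.log ‖w‖ - 2 * Real.log ‖w - p‖ - 2 * Real.log ‖w - q‖
      + 2 * Real.log ‖w - p - q‖ = 2 * (Real.log ‖w‖ - Real.log ‖w - p‖ - Real.log ‖w - q‖
      + Real.log ‖w - p - q‖) by ring, abs_mul, abs_two] at key
  linarith [show 6 * ‖p‖ * ‖q‖ / ρ ^ 2 = 2 * (3 * ‖p‖ * ‖q‖ / ρ ^ 2) by ring]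

theorem abs_log_inv_dist_second_diff_le {x y a b : F} {η : ℝ} (ha : ‖a‖ ≤ η) (hb : ‖b‖ ≤ η)
    (hxy : 10 * η < dist x y) :
    |Real.log (1 / dist x y) + Real.log (1 / dist (x - a) (y - b))
      - Real.log (1 / dist (x - a) y) - Real.log (1 / dist x (y - b))| ≤ 5 * η ^ 2 / dist x y ^ 2 := by
  have hη : 0 ≤ η := (norm_nonneg a).trans ha
  have hxy₀ : 0 < dist x y := by linarith
  -- `x - a - (y - b) = (x - y) - a - (-b)`: the log part is the second difference of `log ‖·‖`
  have hr : dist x y = ‖x - y‖ := dist_eq_norm x y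
  have key := abs_log_norm_second_diff_le (w := x - y) (p := a) (q := -b)
    (by rw [norm_neg, ← hr]; linarith)
  have e1 : dist (x - a) (y - b) = ‖x - y - a - -b‖ := by rw [dist_eq_norm]; congr 1; abel
  have e2 : dist (x - a) y = ‖x - y - a‖ := by rw [dist_eq_norm]; congr 1; abel
  have e3 : dist x (y - b) = ‖x - y - -b‖ := by rw [dist_eq_norm]; congr 1; abel
  rw [← hr, norm_neg, ← e1, ← e2, ← e3] at key
  simp only [one_div, Real.log_inv]
  calc _ = |Real.log (dist x y) - Real.log (dist (x - a) y) - Real.log (dist x (y - b))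
        + Real.log (dist (x - a) (y - b))| := by rw [← abs_neg]; ring_nf
    _ ≤ 3 * ‖a‖ * ‖b‖ / (dist x y - ‖a‖ - ‖b‖) ^ 2 := key
    -- `3 (5/4)² ≤ 5`
    _ ≤ 3 * η ^ 2 / (4 / 5 * dist x y) ^ 2 := by
        rw [sq η, ← mul_assoc]; gcongr; linarith
    _ ≤ 5 * η ^ 2 / dist x y ^ 2 := by
        rw [div_le_div_iff₀ (by positivity) (by positivity)]; nlinarith [sq_nonneg η]

theorem abs_log_inv_dist_add_second_diff_le {C g : F → F → ℝ}
    (hC : ∀ x y, C x y = Real.log (1 / dist x y) + g x y) {x y a b : F} {η M R : ℝ}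
    (ha : ‖a‖ ≤ η) (hb : ‖b‖ ≤ η) (hxy : 10 * η < dist x y) (hR : dist x y ≤ R) (hM : 0 ≤ M)
    (hg : |g x y - g (x - a) y - g x (y - b) + g (x - a) (y - b)| ≤ M * ‖a‖ * ‖b‖) :
    |C x y + C (x - a) (y - b) - C (x - a) y - C x (y - b)|
      ≤ (5 + M * R ^ 2) * η ^ 2 / dist x y ^ 2 := by
  have hη : 0 ≤ η := (norm_nonneg a).trans ha
  have hxy₀ : 0 < dist x y := by linarith
  have hlog := abs_log_inv_dist_second_diff_le ha hb hxy
  have hg' : M * ‖a‖ * ‖b‖ ≤ M * R ^ 2 * η ^ 2 / dist x y ^ 2 := by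
    rw [le_div_iff₀ (by positivity)]
    calc M * ‖a‖ * ‖b‖ * dist x y ^ 2 ≤ M * η * η * R ^ 2 := by gcongr
      _ = M * R ^ 2 * η ^ 2 := by ring
  simp only [hC]
  calc _ = |(Real.log (1 / dist x y) + Real.log (1 / dist (x - a) (y - b))
        - Real.log (1 / dist (x - a) y) - Real.log (1 / dist x (y - b)))
        + (g x y - g (x - a) y - g x (y - b) + g (x - a) (y - b))| := by
        congr 1; ring
    _ ≤ _ := abs_add_le _ _
    _ ≤ 5 * η ^ 2 / dist x y ^ 2 + M * R ^ 2 * η ^ 2 / dist x y ^ 2 := by linarith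
    _ = _ := by ring

end LogNorm

theorem sub_smul_mem_cthickening {E : Type*} [SeminormedAddCommGroup E] [NormedSpace ℝ E]
    {K : Set E} {δ t : ℝ} {x w : E} (hx : x ∈ K) (hw : ‖w‖ ≤ δ) (ht : t ∈ Icc (0 : ℝ) 1) :
    x - t • w ∈ cthickening δ K := by
  refine mem_cthickening_of_dist_le _ x δ K hx ?_
  rw [dist_eq_norm, sub_sub_cancel_left, norm_neg, norm_smul, Real.norm_of_nonneg ht.1]
  exact (mul_le_of_le_one_left (norm_nonneg w) ht.2).trans hw

theorem stmt4_general (d : ℕ)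
    (U : Set (EuclideanSpace ℝ (Fin d))) (hU : IsOpen U)
    (g : EuclideanSpace ℝ (Fin d) → EuclideanSpace ℝ (Fin d) → ℝ)
    (hg : ContDiffOn ℝ 2
      (fun p : EuclideanSpace ℝ (Fin d) × EuclideanSpace ℝ (Fin d) => g p.1 p.2) (U ×ˢ U))
    (C : EuclideanSpace ℝ (Fin d) → EuclideanSpace ℝ (Fin d) → ℝ)
    (hC : ∀ x y, C x y = Real.log (1 / dist x y) + g x y)
    (K : Set (EuclideanSpace ℝ (Fin d))) (hK : IsCompact K)
    (δ : ℝ) (hδ0 : 0 < δ)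
    (hδU : ∀ x ∈ K, ∀ z : EuclideanSpace ℝ (Fin d), dist z x < 3 * δ → z ∈ U)
    (β : ℝ) (hβ : 0 < β) :
    ∃ c > 0, ∀ η ∈ Set.Ioo (0:ℝ) δ, ∀ u v : EuclideanSpace ℝ (Fin d),
      ‖u‖ ≤ 1 → ‖v‖ ≤ 1 → ∀ x ∈ K, ∀ y ∈ K, 10 * η < dist x y →
      |Real.exp (β ^ 2 * (C x y + C (x - η • u) (y - η • v)
          - C (x - η • u) y - C x (y - η • v))) - 1|
        ≤ c * η ^ 2 / dist x y ^ 2 := by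
  have hKδU : cthickening δ K ⊆ U := fun z hz => by
    obtain ⟨x, hx, hzx⟩ := mem_thickening_iff.1
      (cthickening_subset_thickening' (δ₂ := 3 * δ) (by linarith) (by linarith) K hz)
    exact hδU x hx z hzx
  obtain ⟨M, hM0, hM⟩ := exists_abs_mixed_diff_le hU hg hK.cthickening hKδU
  set B := β ^ 2 * (5 + M * diam K ^ 2)
  refine ⟨B * Real.exp (B / 100), by positivity, ?_⟩
  rintro η ⟨hη0, hηδ⟩ u v hu hv x hx y hy hxy
  have hηw : ∀ w : EuclideanSpace ℝ (Fin d), ‖w‖ ≤ 1 → ‖η • w‖ ≤ η := fun w hw => by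
    rw [norm_smul, Real.norm_of_nonneg hη0.le]; exact mul_le_of_le_one_right hη0.le hw
  have hC_diff := abs_log_inv_dist_add_second_diff_le hC (hηw u hu) (hηw v hv) hxy
    (dist_le_diam_of_mem hK.isBounded hx hy) hM0
    (hM x y _ _ (fun s hs => sub_smul_mem_cthickening hx ((hηw u hu).trans hηδ.le) hs)
      (fun t ht => sub_smul_mem_cthickening hy ((hηw v hv).trans hηδ.le) ht))
  have hq : η ^ 2 / dist x y ^ 2 ≤ 1 / 100 := by
    rw [div_le_div_iff₀ (by nlinarith) (by norm_num)]; nlinarith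
  have hexponent : |β ^ 2 * (C x y + C (x - η • u) (y - η • v) - C (x - η • u) y
      - C x (y - η • v))| ≤ B * (η ^ 2 / dist x y ^ 2) := by
    rw [abs_mul, abs_of_nonneg (sq_nonneg β), mul_assoc, ← mul_div_assoc]
    gcongr
  calc _ ≤ B * (η ^ 2 / dist x y ^ 2) * Real.exp (B * (η ^ 2 / dist x y ^ 2)) :=
        abs_exp_sub_one_le_mul_exp_of_abs_le hexponent
    _ ≤ B * (η ^ 2 / dist x y ^ 2) * Real.exp (B * (1 / 100)) := by gcongr
    _ = B * Real.exp (B / 100) * η ^ 2 / dist x y ^ 2 := by ring_nf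

/-- **The factor `E` is `1 + O(η²/|x−y|²)` at a single scale.**
With `C(x,y) = log(1/|x−y|) + g(x,y)` for `g ∈ C²(U × U)`, `K ⊆ U` compact and
`δ = min(1, dist(K, Uᶜ)/3)` (encoded by `0 < δ ≤ 1` and `ball(x, 3δ) ⊆ U` for `x ∈ K`),
for every `β > 0` there is `c > 0` so that for all `η ∈ (0,δ)`, `|u|,|v| ≤ 1` and
`x, y ∈ K` with `|x−y| > 10η`,
`|exp(β²(C(x,y) + C(x−ηu, y−ηv) − C(x−ηu, y) − C(x, y−ηv))) − 1| ≤ c η²/|x−y|²`. -/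
theorem stmt4 (d : ℕ) (hd : 2 ≤ d)
    (U : Set (EuclideanSpace ℝ (Fin d))) (hU : IsOpen U)
    (g : EuclideanSpace ℝ (Fin d) → EuclideanSpace ℝ (Fin d) → ℝ)
    (hg : ContDiffOn ℝ 2
      (fun p : EuclideanSpace ℝ (Fin d) × EuclideanSpace ℝ (Fin d) => g p.1 p.2) (U ×ˢ U))
    (C : EuclideanSpace ℝ (Fin d) → EuclideanSpace ℝ (Fin d) → ℝ)
    (hC : ∀ x y, C x y = Real.log (1 / dist x y) + g x y)
    (K : Set (EuclideanSpace ℝ (Fin d))) (hK : IsCompact K) (hKne : K.Nonempty) (hKU : K ⊆ U)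
    (δ : ℝ) (hδ0 : 0 < δ) (hδ1 : δ ≤ 1)
    (hδU : ∀ x ∈ K, ∀ z : EuclideanSpace ℝ (Fin d), dist z x < 3 * δ → z ∈ U)
    (β : ℝ) (hβ : 0 < β) :
    ∃ c > 0, ∀ η ∈ Set.Ioo (0:ℝ) δ, ∀ u v : EuclideanSpace ℝ (Fin d),
      ‖u‖ ≤ 1 → ‖v‖ ≤ 1 → ∀ x ∈ K, ∀ y ∈ K, 10 * η < dist x y →
      |Real.exp (β ^ 2 * (C x y + C (x - η • u) (y - η • v)
          - C (x - η • u) y - C x (y - η • v))) - 1|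
        ≤ c * η ^ 2 / dist x y ^ 2 :=
  stmt4_general d U hU g hg C hC K hK δ hδ0 hδU β hβ
end

section
/- For every β > 0 there exists a constant c > 0 (depending only on d, g, K and β) such that for all η₁, η₂ with 0 < η₁ < η₂/100 and η₂ < δ, all u, v ∈ ℝ^d with |u| ≤ 1 and |v| ≤ 1, and all x, y ∈ K satisfying |x − y| > 10η₁ and |x − y + η₂v| > 10η₁, one has |exp(β²(C(x,y) + C(x − η₁u, y − η₂v) − C(x − η₁u, y) − C(x, y − η₂v))) − 1| ≤ c η₁ (1/|x − y| + 1/|x − y + η₂v|). -/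
/-!
In the mixed difference of `C` the logarithms pair up into two increments
`log|x - η₁u - z| - log|x - z|` (for `z = y` and `z = y - η₂v`), each of relative size
`O(η₁/|x - z|)` because `|x - z| > 10η₁`. The smooth part contributes `O(η₁)` through the Lipschitz
constant of `g` on the compact `δ`-thickening of `K`, which is absorbed into the singular terms
since `|x - y| ≤ diam K`. The exponent is then bounded, and `|eˢ - 1| ≤ e^B |s|` for `|s| ≤ B`.
-/

open Real Metric Set

theorem Real.abs_exp_sub_one_le_exp_mul_abs {s B : ℝ} (h : |s| ≤ B) :
    |exp s - 1| ≤ exp B * |s| := by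
  have hmem : ∀ t, |t| ≤ B → t ∈ Icc (-B) B := fun t ht => abs_le.mp ht
  have hB : 0 ≤ B := (abs_nonneg s).trans h
  simpa [Real.norm_eq_abs] using (convex_Icc (-B) B).norm_image_sub_le_of_norm_deriv_le
    (fun _ _ => differentiableAt_exp)
    (fun t ht => by simpa [Real.norm_eq_abs] using exp_le_exp.mpr ht.2)
    (hmem 0 (by simpa using hB)) (hmem s h)

theorem Real.abs_log_sub_log_le {a b : ℝ} (ha : 0 < a) (hb : 0 < b) :
    |log b - log a| ≤ |b - a| / min a b := by
  have hm : 0 < min a b := lt_min ha hb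
  rw [abs_sub_le_iff, ← log_div hb.ne' ha.ne', ← log_div ha.ne' hb.ne']
  constructor
  · calc log (b / a) ≤ b / a - 1 := log_le_sub_one_of_pos (by positivity)
      _ = (b - a) / a := by field_simp
      _ ≤ |b - a| / min a b := div_le_div₀ (abs_nonneg _) (le_abs_self _) hm (min_le_left a b)
  · calc log (a / b) ≤ a / b - 1 := log_le_sub_one_of_pos (by positivity)
      _ = (a - b) / b := by field_simp
      _ ≤ |b - a| / min a b :=
        div_le_div₀ (abs_nonneg _) (abs_sub_comm b a ▸ le_abs_self _) hm (min_le_right a b)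

theorem Real.abs_log_sub_log_le_of_abs_sub_le {a b η : ℝ} (ha : 10 * η < a)
    (hab : |b - a| ≤ η) : |log b - log a| ≤ 10 / 9 * (η / a) := by
  have hη : 0 ≤ η := (abs_nonneg _).trans hab
  have hmin : 9 / 10 * a ≤ min a b := le_min (by linarith) (by linarith [(abs_le.mp hab).1])
  calc |log b - log a| ≤ |b - a| / min a b :=
      abs_log_sub_log_le (by linarith) (by linarith [(abs_le.mp hab).1])
    _ ≤ η / (9 / 10 * a) := div_le_div₀ hη hab (by linarith) hmin
    _ = 10 / 9 * (η / a) := by field_simp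

theorem Metric.cthickening_subset_of_forall_dist_lt {α : Type*} [PseudoMetricSpace α]
    {K U : Set α} {δ r : ℝ} (hK : IsCompact K) (hδ : 0 ≤ δ) (hδr : δ < r)
    (hU : ∀ x ∈ K, ∀ z, dist z x < r → z ∈ U) : cthickening δ K ⊆ U := by
  rw [hK.cthickening_eq_biUnion_closedBall hδ]
  exact iUnion₂_subset fun x hx z hz => hU x hx z ((mem_closedBall.mp hz).trans_lt hδr)

theorem ContDiffOn.locallyLipschitzOn_of_isOpen {E F : Type*} [NormedAddCommGroup E]
    [NormedSpace ℝ E] [NormedAddCommGroup F] [NormedSpace ℝ F] {f : E → F} {s : Set E}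
    {n : WithTop ℕ∞} (hf : ContDiffOn ℝ n f s) (hn : n ≠ 0) (hs : IsOpen s) :
    LocallyLipschitzOn s f := by
  intro x hx
  obtain ⟨K, t, ht, hK⟩ := ((hf.contDiffAt (hs.mem_nhds hx)).of_le
    (ENat.one_le_iff_ne_zero_withTop.2 hn)).exists_lipschitzOnWith
  exact ⟨K, t, mem_nhdsWithin_of_mem_nhds ht, hK⟩

section MixedDifference

variable {α : Type*} [PseudoMetricSpace α]

theorem LipschitzOnWith.abs_sub_le_left {g : α → α → ℝ} {L : NNReal} {s t : Set α}
    (hL : LipschitzOnWith L (fun p => g p.1 p.2) (s ×ˢ t)) {x x' z : α} (hx : x ∈ s)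
    (hx' : x' ∈ s) (hz : z ∈ t) : |g x z - g x' z| ≤ L * dist x x' := by
  simpa [Prod.dist_eq, Real.dist_eq] using hL.dist_le_mul (x, z) ⟨hx, hz⟩ (x', z) ⟨hx', hz⟩

theorem abs_log_dist_sub_log_dist_le {x x' y : α} {η : ℝ} (hxx' : dist x x' ≤ η)
    (hxy : 10 * η < dist x y) : |log (dist x' y) - log (dist x y)| ≤ 10 / 9 * (η / dist x y) :=
  abs_log_sub_log_le_of_abs_sub_le hxy ((abs_dist_sub_le x' x y).trans (dist_comm x x' ▸ hxx'))

theorem abs_mixedDifference_le {C g : α → α → ℝ}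
    (hC : ∀ x y, C x y = log (1 / dist x y) + g x y) {x x' y y' : α} {η M R : ℝ} (hM : 0 ≤ M)
    (hxx' : dist x x' ≤ η) (hxy : 10 * η < dist x y) (hxy' : 10 * η < dist x y')
    (hR : dist x y ≤ R) (hgy : |g x y - g x' y| ≤ M * η) (hgy' : |g x y' - g x' y'| ≤ M * η) :
    |C x y + C x' y' - C x' y - C x y'| ≤
      (10 / 9 + 2 * M * R) * η * (1 / dist x y + 1 / dist x y') := by
  have hη : 0 ≤ η := dist_nonneg.trans hxx'
  have ha : 0 < dist x y := by linarith
  have ha' : 0 < dist x y' := by linarith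
  have hlog := abs_log_dist_sub_log_dist_le (y := y) hxx' hxy
  have hlog' := abs_log_dist_sub_log_dist_le (y := y') hxx' hxy'
  have hsplit : C x y + C x' y' - C x' y - C x y' =
      (log (dist x' y) - log (dist x y)) - (log (dist x' y') - log (dist x y'))
        + (g x y - g x' y) - (g x y' - g x' y') := by
    simp only [hC, one_div, log_inv]; ring
  have hRη : η ≤ R * (η / dist x y) := by
    rw [mul_div_assoc', le_div_iff₀ ha]
    exact mul_le_mul_of_nonneg_left hR hη |>.trans_eq (mul_comm _ _)
  have hR' : 0 ≤ R := ha.le.trans hR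
  have hsum : |C x y + C x' y' - C x' y - C x y'| ≤
      10 / 9 * (η / dist x y) + 10 / 9 * (η / dist x y') + 2 * (M * η) := by
    rw [hsplit]
    have h₁ := abs_sub (log (dist x' y) - log (dist x y)) (log (dist x' y') - log (dist x y'))
    have h₂ := abs_add_le ((log (dist x' y) - log (dist x y)) -
      (log (dist x' y') - log (dist x y'))) (g x y - g x' y)
    have h₃ := abs_sub ((log (dist x' y) - log (dist x y)) -
      (log (dist x' y') - log (dist x y')) + (g x y - g x' y)) (g x y' - g x' y')
    linarith
  calc _ ≤ 10 / 9 * (η / dist x y) + 10 / 9 * (η / dist x y') + 2 * (M * η) := hsum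
    _ ≤ 10 / 9 * (η / dist x y) + 10 / 9 * (η / dist x y')
          + 2 * M * (R * (η / dist x y) + R * (η / dist x y')) := by
        have hη' : 0 ≤ R * (η / dist x y') := by positivity
        have := mul_le_mul_of_nonneg_left (hRη.trans (le_add_of_nonneg_right hη')) hM
        linarith
    _ = _ := by ring

end MixedDifference

theorem abs_exp_sq_mul_sub_one_le {D η a a' A β : ℝ} (hη : 0 ≤ η) (ha : 10 * η < a)
    (ha' : 10 * η < a') (hA : 0 ≤ A) (hD : |D| ≤ A * η * (1 / a + 1 / a')) :
    |exp (β ^ 2 * D) - 1| ≤ exp (β ^ 2 * A / 5) * β ^ 2 * A * η * (1 / a + 1 / a') := by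
  have hsmall : η * (1 / a + 1 / a') ≤ 1 / 5 := by
    have h₁ : η / a ≤ 1 / 10 := by rw [div_le_iff₀ (by linarith)]; linarith
    have h₂ : η / a' ≤ 1 / 10 := by rw [div_le_iff₀ (by linarith)]; linarith
    rw [mul_add, mul_one_div, mul_one_div]
    linarith
  have hβD : |β ^ 2 * D| ≤ β ^ 2 * (A * η * (1 / a + 1 / a')) := by
    rw [abs_mul, abs_of_nonneg (sq_nonneg β)]
    exact mul_le_mul_of_nonneg_left hD (sq_nonneg β)
  have hB : β ^ 2 * (A * η * (1 / a + 1 / a')) ≤ β ^ 2 * A / 5 := by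
    have := mul_le_mul_of_nonneg_left (mul_le_mul_of_nonneg_left hsmall hA) (sq_nonneg β)
    linarith
  calc |exp (β ^ 2 * D) - 1| ≤ exp (β ^ 2 * A / 5) * |β ^ 2 * D| :=
        abs_exp_sub_one_le_exp_mul_abs (hβD.trans hB)
    _ ≤ exp (β ^ 2 * A / 5) * (β ^ 2 * (A * η * (1 / a + 1 / a'))) :=
        mul_le_mul_of_nonneg_left hβD (exp_pos _).le
    _ = _ := by ring

theorem stmt5_general (d : ℕ)
    (U : Set (EuclideanSpace ℝ (Fin d))) (hU : IsOpen U)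
    (g : EuclideanSpace ℝ (Fin d) → EuclideanSpace ℝ (Fin d) → ℝ)
    (hg : ContDiffOn ℝ 2
      (fun p : EuclideanSpace ℝ (Fin d) × EuclideanSpace ℝ (Fin d) => g p.1 p.2) (U ×ˢ U))
    (C : EuclideanSpace ℝ (Fin d) → EuclideanSpace ℝ (Fin d) → ℝ)
    (hC : ∀ x y, C x y = Real.log (1 / dist x y) + g x y)
    (K : Set (EuclideanSpace ℝ (Fin d))) (hK : IsCompact K)
    (δ : ℝ) (hδ0 : 0 < δ)
    (hδU : ∀ x ∈ K, ∀ z : EuclideanSpace ℝ (Fin d), dist z x < 3 * δ → z ∈ U)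
    (β : ℝ) (hβ : 0 < β) :
    ∃ c > 0, ∀ η₁ η₂ : ℝ, 0 < η₁ → η₁ < η₂ / 100 → η₂ < δ →
      ∀ u v : EuclideanSpace ℝ (Fin d), ‖u‖ ≤ 1 → ‖v‖ ≤ 1 →
      ∀ x ∈ K, ∀ y ∈ K, 10 * η₁ < dist x y → 10 * η₁ < ‖x - y + η₂ • v‖ →
      |Real.exp (β ^ 2 * (C x y + C (x - η₁ • u) (y - η₂ • v)
          - C (x - η₁ • u) y - C x (y - η₂ • v))) - 1|
        ≤ c * η₁ * (1 / dist x y + 1 / ‖x - y + η₂ • v‖) := by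
  obtain ⟨L, hL⟩ : ∃ L, LipschitzOnWith L (fun p => g p.1 p.2)
      (cthickening δ K ×ˢ cthickening δ K) := by
    have hsub := cthickening_subset_of_forall_dist_lt hK hδ0.le (by linarith) hδU
    exact LocallyLipschitzOn.exists_lipschitzOnWith_of_compact
      (hK.cthickening.prod hK.cthickening)
      ((hg.locallyLipschitzOn_of_isOpen two_ne_zero (hU.prod hU)).mono (prod_mono hsub hsub))
  set A := 10 / 9 + 2 * (L : ℝ) * diam K
  have hA : 0 < A := by positivity
  refine ⟨exp (β ^ 2 * A / 5) * β ^ 2 * A, by positivity, ?_⟩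
  intro η₁ η₂ hη₁ hη₁₂ hη₂ u v hu hv x hx y hy hxy hxyv
  have hsmul {η : ℝ} {w : EuclideanSpace ℝ (Fin d)} (hη : 0 ≤ η) (hw : ‖w‖ ≤ 1) (z) :
      dist z (z - η • w) ≤ η := by
    simpa [dist_eq_norm, norm_smul, abs_of_nonneg hη] using mul_le_of_le_one_right hη hw
  have hxx' := hsmul hη₁.le hu x
  have hyy' := hsmul (by linarith : 0 ≤ η₂) hv y
  have hxy' : dist x (y - η₂ • v) = ‖x - y + η₂ • v‖ := by
    rw [dist_eq_norm, sub_sub_eq_add_sub, add_sub_right_comm]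
  have hmem {z w} (hz : z ∈ K) (h : dist z w ≤ δ) : w ∈ cthickening δ K :=
    mem_cthickening_of_dist_le w z δ K hz (dist_comm z w ▸ h)
  have hgx {z} (hz : z ∈ cthickening δ K) : |g x z - g (x - η₁ • u) z| ≤ L * η₁ :=
    (hL.abs_sub_le_left (self_subset_cthickening K hx) (hmem hx (by linarith)) hz).trans
      (mul_le_mul_of_nonneg_left hxx' L.2)
  refine abs_exp_sq_mul_sub_one_le hη₁.le hxy hxyv hA.le ?_
  rw [← hxy']
  exact abs_mixedDifference_le hC L.2 hxx' hxy (hxy' ▸ hxyv)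
    (dist_le_diam_of_mem hK.isBounded hx hy) (hgx (self_subset_cthickening K hy))
    (hgx (hmem hy (by linarith)))

/-- **The factor `E` is `1 + O(η₁/|x−y|) + O(η₁/|x−y+η₂v|)` at two scales.**
With `C(x,y) = log(1/|x−y|) + g(x,y)` for `g ∈ C²(U × U)`, `K ⊆ U` compact and
`δ = min(1, dist(K, Uᶜ)/3)` (encoded by `0 < δ ≤ 1` and `ball(x, 3δ) ⊆ U` for `x ∈ K`),
for every `β > 0` there is `c > 0` so that for all `0 < η₁ < η₂/100`, `η₂ < δ`,
`|u|,|v| ≤ 1` and `x, y ∈ K` with `|x−y| > 10η₁` and `|x−y+η₂v| > 10η₁`,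
`|exp(β²(C(x,y) + C(x−η₁u, y−η₂v) − C(x−η₁u, y) − C(x, y−η₂v))) − 1|
  ≤ c η₁ (1/|x−y| + 1/|x−y+η₂v|)`. -/
theorem stmt5 (d : ℕ) (hd : 2 ≤ d)
    (U : Set (EuclideanSpace ℝ (Fin d))) (hU : IsOpen U)
    (g : EuclideanSpace ℝ (Fin d) → EuclideanSpace ℝ (Fin d) → ℝ)
    (hg : ContDiffOn ℝ 2
      (fun p : EuclideanSpace ℝ (Fin d) × EuclideanSpace ℝ (Fin d) => g p.1 p.2) (U ×ˢ U))
    (C : EuclideanSpace ℝ (Fin d) → EuclideanSpace ℝ (Fin d) → ℝ)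
    (hC : ∀ x y, C x y = Real.log (1 / dist x y) + g x y)
    (K : Set (EuclideanSpace ℝ (Fin d))) (hK : IsCompact K) (hKne : K.Nonempty) (hKU : K ⊆ U)
    (δ : ℝ) (hδ0 : 0 < δ) (hδ1 : δ ≤ 1)
    (hδU : ∀ x ∈ K, ∀ z : EuclideanSpace ℝ (Fin d), dist z x < 3 * δ → z ∈ U)
    (β : ℝ) (hβ : 0 < β) :
    ∃ c > 0, ∀ η₁ η₂ : ℝ, 0 < η₁ → η₁ < η₂ / 100 → η₂ < δ →
      ∀ u v : EuclideanSpace ℝ (Fin d), ‖u‖ ≤ 1 → ‖v‖ ≤ 1 →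
      ∀ x ∈ K, ∀ y ∈ K, 10 * η₁ < dist x y → 10 * η₁ < ‖x - y + η₂ • v‖ →
      |Real.exp (β ^ 2 * (C x y + C (x - η₁ • u) (y - η₂ • v)
          - C (x - η₁ • u) y - C x (y - η₂ • v))) - 1|
        ≤ c * η₁ * (1 / dist x y + 1 / ‖x - y + η₂ • v‖) :=
  stmt5_general d U hU g hg C hC K hK δ hδ0 hδU β hβ
end

section
/- For every compact set K ⊆ ℝ² there exists a constant c > 0 such that for all η ∈ (0, 1/2) and all w ∈ ℝ², ∫∫ over {(x,y) ∈ K × K : |x − y| > η and |x − y + w| > η} of 1 / (|x − y| · |x − y + w|) dx dy ≤ c log(1/η). -/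
/-!
Since `1 / (ab) ≤ a⁻² + b⁻²`, it suffices to bound `∫∫_{K × K, |x - y + w| > η} |x - y + w|⁻²`
uniformly in `w`. For fixed `x`, the part of the `y`-integral where `|x - y + w| ≥ 1` is at most
`|K|`, and the part where `η < |x - y + w| < 1` is at most the integral of `|z|⁻²` over the
annulus `η < |z| < 1`, which in polar coordinates equals `2 |B(0, 1)| log (1 / η)`. For
`η < 1 / 2` the constant terms are absorbed by `log (1 / η) ≥ log 2`.
-/

open MeasureTheory Measure Metric Set Module Real
open scoped ENNReal

lemma integrable_and_integral_le_of_lintegral_ofReal_le {α : Type*} [MeasurableSpace α]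
    {μ : Measure α} {f : α → ℝ} {C : ℝ} (hf : AEStronglyMeasurable f μ) (hf₀ : 0 ≤ᵐ[μ] f)
    (hC : 0 ≤ C) (h : ∫⁻ x, ENNReal.ofReal (f x) ∂μ ≤ ENNReal.ofReal C) :
    Integrable f μ ∧ ∫ x, f x ∂μ ≤ C := by
  refine ⟨⟨hf, (hasFiniteIntegral_iff_ofReal hf₀).2 (h.trans_lt ENNReal.ofReal_lt_top)⟩, ?_⟩
  rw [integral_eq_lintegral_of_nonneg_ae hf₀ hf, ← ENNReal.toReal_ofReal hC]
  exact ENNReal.toReal_mono ENNReal.ofReal_ne_top h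

section TruncatedKernel

variable {E : Type*} [SeminormedAddCommGroup E]

noncomputable def truncInvNormPow (d : ℕ) (η : ℝ) (z : E) : ℝ≥0∞ :=
  if η < ‖z‖ then ENNReal.ofReal (‖z‖ ^ d)⁻¹ else 0

lemma measurableSet_annulus [MeasurableSpace E] [OpensMeasurableSpace E] (η R : ℝ) :
    MeasurableSet {z : E | ‖z‖ ∈ Ioo η R} :=
  measurableSet_Ioo.preimage continuous_norm.measurable

@[fun_prop]
lemma measurable_truncInvNormPow [MeasurableSpace E] [OpensMeasurableSpace E] (d : ℕ) (η : ℝ) :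
    Measurable (truncInvNormPow (E := E) d η) :=
  Measurable.ite (measurableSet_lt measurable_const continuous_norm.measurable) (by fun_prop)
    measurable_const

lemma truncInvNormPow_le_indicator_annulus_add_one (d : ℕ) (η : ℝ) (z : E) :
    truncInvNormPow d η z
      ≤ {z : E | ‖z‖ ∈ Ioo η 1}.indicator (fun z => ENNReal.ofReal (‖z‖ ^ d)⁻¹) z + 1 := by
  unfold truncInvNormPow
  split_ifs with hη
  · rcases lt_or_ge ‖z‖ 1 with h1 | h1
    · rw [indicator_of_mem (s := {z : E | ‖z‖ ∈ Ioo η 1}) ⟨hη, h1⟩]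
      exact le_self_add
    · exact le_add_left (ENNReal.ofReal_le_one.2 (inv_le_one_of_one_le₀ (one_le_pow₀ h1)))
  · exact zero_le

lemma ofReal_one_div_norm_mul_norm_le_truncInvNormPow_add {η : ℝ} (hη : 0 ≤ η) {u v : E}
    (hu : η < ‖u‖) (hv : η < ‖v‖) :
    ENNReal.ofReal (1 / (‖u‖ * ‖v‖)) ≤ truncInvNormPow 2 η u + truncInvNormPow 2 η v := by
  have ha : 0 < ‖u‖ := hη.trans_lt hu
  have hb : 0 < ‖v‖ := hη.trans_lt hv
  rw [truncInvNormPow, truncInvNormPow, if_pos hu, if_pos hv,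
    ← ENNReal.ofReal_add (by positivity) (by positivity)]
  refine ENNReal.ofReal_le_ofReal ?_
  rw [← one_div, ← one_div, div_add_div _ _ (by positivity) (by positivity),
    div_le_div_iff₀ (by positivity) (by positivity)]
  nlinarith [sq_nonneg (‖u‖ - ‖v‖), mul_pos ha hb]

end TruncatedKernel

section HaarMeasure

variable {E : Type*} [NormedAddCommGroup E] [NormedSpace ℝ E] [FiniteDimensional ℝ E]
  [MeasurableSpace E] [BorelSpace E] (μ : Measure E) [μ.IsAddHaarMeasure]

lemma integrableOn_inv_norm_pow_annulus {η : ℝ} (hη : 0 < η) (d : ℕ) :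
    IntegrableOn (fun z : E => (‖z‖ ^ d)⁻¹) {z | ‖z‖ ∈ Ioo η 1} μ := by
  have hfin : μ {z : E | ‖z‖ ∈ Ioo η 1} ≠ ∞ :=
    (measure_mono fun z hz => mem_ball_zero_iff.2 hz.2).trans_lt measure_ball_lt_top |>.ne
  refine Measure.integrableOn_of_bounded hfin (by fun_prop) (M := (η ^ d)⁻¹) ?_
  filter_upwards [ae_restrict_mem (measurableSet_annulus η 1)] with z hz
  rw [norm_inv, norm_pow, norm_norm]
  exact inv_anti₀ (by positivity) (pow_le_pow_left₀ hη.le hz.1.le d)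

lemma setIntegral_inv_norm_pow_finrank_annulus [Nontrivial E] {η : ℝ} (hη : 0 < η)
    (hη₁ : η ≤ 1) :
    ∫ z in {z : E | ‖z‖ ∈ Ioo η 1}, (‖z‖ ^ finrank ℝ E)⁻¹ ∂μ
      = finrank ℝ E * μ.real (ball 0 1) * log (1 / η) := by
  set d := finrank ℝ E
  have hradial : ∫ y in Ioi (0 : ℝ), y ^ (d - 1) • (Ioo η 1).indicator (fun r => (r ^ d)⁻¹) y
      = log (1 / η) := by
    have hcancel (y : ℝ) : y ^ (d - 1) • (Ioo η 1).indicator (fun r => (r ^ d)⁻¹) y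
        = (Ioo η 1).indicator (fun r => r⁻¹) y := by
      by_cases hy : y ∈ Ioo η 1
      · rw [indicator_of_mem hy, indicator_of_mem hy, smul_eq_mul,
          ← pow_sub_one_mul finrank_pos.ne', mul_inv, ← mul_assoc,
          mul_inv_cancel₀ (pow_ne_zero _ (hη.trans hy.1).ne'), one_mul]
      · simp [indicator_of_notMem hy]
    simp_rw [hcancel]
    rw [setIntegral_indicator measurableSet_Ioo,
      inter_eq_self_of_subset_right (Ioo_subset_Ioi_self.trans (Ioi_subset_Ioi hη.le)),
      ← integral_Ioc_eq_integral_Ioo, ← intervalIntegral.integral_of_le hη₁,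
      integral_inv_of_pos hη one_pos]
  have hindicator (z : E) : {z : E | ‖z‖ ∈ Ioo η 1}.indicator (fun z => (‖z‖ ^ d)⁻¹) z
      = (Ioo η 1).indicator (fun r => (r ^ d)⁻¹) ‖z‖ := rfl
  rw [← integral_indicator (measurableSet_annulus η 1)]
  simp_rw [hindicator]
  rw [integral_fun_norm_addHaar μ, hradial, nsmul_eq_mul, smul_eq_mul, mul_assoc]

lemma setLIntegral_ofReal_inv_norm_pow_finrank_annulus [Nontrivial E] {η : ℝ} (hη : 0 < η)
    (hη₁ : η ≤ 1) :
    ∫⁻ z in {z : E | ‖z‖ ∈ Ioo η 1}, ENNReal.ofReal (‖z‖ ^ finrank ℝ E)⁻¹ ∂μ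
      = ENNReal.ofReal (finrank ℝ E * μ.real (ball 0 1) * log (1 / η)) := by
  rw [← setIntegral_inv_norm_pow_finrank_annulus μ hη hη₁,
    ofReal_integral_eq_lintegral_ofReal (integrableOn_inv_norm_pow_annulus μ hη _)
      (.of_forall fun z => by positivity)]

lemma setLIntegral_truncInvNormPow_sub_le [Nontrivial E] {η : ℝ} (hη : 0 < η) (hη₁ : η ≤ 1)
    (K : Set E) (v : E) :
    ∫⁻ y in K, truncInvNormPow (finrank ℝ E) η (v - y) ∂μ
      ≤ ENNReal.ofReal (finrank ℝ E * μ.real (ball 0 1) * log (1 / η)) + μ K := by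
  set g := {z : E | ‖z‖ ∈ Ioo η 1}.indicator fun z => ENNReal.ofReal (‖z‖ ^ finrank ℝ E)⁻¹
  have hg : Measurable g := (by fun_prop : Measurable _).indicator (measurableSet_annulus η 1)
  calc ∫⁻ y in K, truncInvNormPow (finrank ℝ E) η (v - y) ∂μ
      ≤ ∫⁻ y in K, (g (v - y) + 1) ∂μ :=
        lintegral_mono fun y => truncInvNormPow_le_indicator_annulus_add_one _ _ _
    _ = ∫⁻ y in K, g (v - y) ∂μ + μ K := by
        rw [lintegral_add_right _ measurable_const, setLIntegral_const, one_mul]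
    _ ≤ ∫⁻ y, g (v - y) ∂μ + μ K := by gcongr; exact restrict_le_self
    _ = ∫⁻ z, g z ∂μ + μ K := by rw [(measurePreserving_sub_left μ v).lintegral_comp hg]
    _ = _ := by
        rw [lintegral_indicator (measurableSet_annulus η 1),
          setLIntegral_ofReal_inv_norm_pow_finrank_annulus μ hη hη₁]

lemma setLIntegral_prod_truncInvNormPow_le [Nontrivial E] {η : ℝ} (hη : 0 < η) (hη₁ : η ≤ 1)
    (K : Set E) (w : E) :
    ∫⁻ p in K ×ˢ K, truncInvNormPow (finrank ℝ E) η (p.1 - p.2 + w) ∂μ.prod μ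
      ≤ (ENNReal.ofReal (finrank ℝ E * μ.real (ball 0 1) * log (1 / η)) + μ K) * μ K := by
  rw [← prod_restrict, ← setLIntegral_const]
  refine (lintegral_prod_le _).trans (lintegral_mono fun x => ?_)
  simpa only [sub_add_eq_add_sub] using setLIntegral_truncInvNormPow_sub_le μ hη hη₁ K (x + w)

end HaarMeasure

/-- **Off-diagonal integral of `1/(|x−y| |x−y+w|)` over a compact set in `ℝ²`.**
For every compact `K ⊆ ℝ²` there is `c > 0` such that for all `η ∈ (0, 1/2)` and all
`w ∈ ℝ²`, `∫∫_{x,y ∈ K, |x−y| > η, |x−y+w| > η} 1/(|x−y| |x−y+w|) dx dy ≤ c log(1/η)`. -/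
theorem stmt12 (K : Set (EuclideanSpace ℝ (Fin 2))) (hK : IsCompact K) :
    ∃ c > 0, ∀ η : ℝ, η ∈ Set.Ioo (0:ℝ) (1/2) → ∀ w : EuclideanSpace ℝ (Fin 2),
      IntegrableOn
        (fun p : EuclideanSpace ℝ (Fin 2) × EuclideanSpace ℝ (Fin 2) =>
          1 / (dist p.1 p.2 * ‖p.1 - p.2 + w‖))
        {p : EuclideanSpace ℝ (Fin 2) × EuclideanSpace ℝ (Fin 2) |
          p.1 ∈ K ∧ p.2 ∈ K ∧ η < dist p.1 p.2 ∧ η < ‖p.1 - p.2 + w‖} volume ∧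
      (∫ p : EuclideanSpace ℝ (Fin 2) × EuclideanSpace ℝ (Fin 2) in
          {p : EuclideanSpace ℝ (Fin 2) × EuclideanSpace ℝ (Fin 2) |
            p.1 ∈ K ∧ p.2 ∈ K ∧ η < dist p.1 p.2 ∧ η < ‖p.1 - p.2 + w‖},
          1 / (dist p.1 p.2 * ‖p.1 - p.2 + w‖))
        ≤ c * Real.log (1 / η) := by
  set B := (volume : Measure (EuclideanSpace ℝ (Fin 2))).real (ball 0 1)
  set V := volume.real K
  refine ⟨4 * B * V + 2 * V ^ 2 / log 2 + 1, by positivity, fun η ⟨hη₀, hη₂⟩ w => ?_⟩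
  set L := log (1 / η)
  have hL : log 2 ≤ L := log_le_log two_pos (by rw [le_div_iff₀ hη₀]; linarith)
  have hL₀ : 0 ≤ L := (log_pos one_lt_two).le.trans hL
  have hkernel (v : EuclideanSpace ℝ (Fin 2)) :
      ∫⁻ p in K ×ˢ K, truncInvNormPow 2 η (p.1 - p.2 + v)
        ≤ ENNReal.ofReal ((2 * B * L + V) * V) := by
    have h := setLIntegral_prod_truncInvNormPow_le volume hη₀ (by linarith) K v
    rw [finrank_euclideanSpace_fin, ← Measure.volume_eq_prod,
      ← ofReal_measureReal hK.measure_lt_top.ne, Nat.cast_ofNat,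
      ← ENNReal.ofReal_add (by positivity) (by positivity),
      ← ENNReal.ofReal_mul (by positivity)] at h
    exact h
  refine integrable_and_integral_le_of_lintegral_ofReal_le
    (Measurable.aestronglyMeasurable (by fun_prop)) (.of_forall fun p => by positivity)
    (by positivity) ?_
  calc _ ≤ ∫⁻ p in K ×ˢ K,
          (truncInvNormPow 2 η (p.1 - p.2 + 0) + truncInvNormPow 2 η (p.1 - p.2 + w)) := by
        refine (setLIntegral_mono (by fun_prop) fun p hp => ?_).trans
          (lintegral_mono_set fun p hp => ⟨hp.1, hp.2.1⟩)
        simp only [add_zero, dist_eq_norm, mem_ofPred_eq] at hp ⊢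
        exact ofReal_one_div_norm_mul_norm_le_truncInvNormPow_add hη₀.le hp.2.2.1 hp.2.2.2
    _ ≤ ENNReal.ofReal ((2 * B * L + V) * V + (2 * B * L + V) * V) := by
        rw [lintegral_add_left (by fun_prop), ENNReal.ofReal_add (by positivity) (by positivity)]
        exact add_le_add (hkernel 0) (hkernel w)
    _ ≤ _ := by
        refine ENNReal.ofReal_le_ofReal ?_
        nlinarith [mul_le_mul_of_nonneg_left hL (by positivity : 0 ≤ 2 * V ^ 2 / log 2),
          div_mul_cancel₀ (2 * V ^ 2) (log_pos one_lt_two).ne']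
end

section
/- For every smooth compactly supported function f on U, the quadruple integral J(η₁, η₂) := ∫∫∫∫ f(x) (∂₁f)(y + η₂v) ∂₁C(x − η₁u, y) φ(u) φ(v) du dv dx dy (over u, v, x, y ∈ ℝ^d, with the integrand set to 0 outside its domain of definition, and with 0 < η₁, η₂ < dist(supp f, ℝ^d ∖ U)/4) converges, as (η₁, η₂) → (0, 0), to ∫∫ f(x) (∂₁f)(y) ∂₁C(x, y) dx dy. -/
/-!
Substituting `x ↦ x + η₁ u` moves the mollification off the singular kernel:
`J(η₁, η₂) = ∫ f(x + η₁u) (∂₁f)(y + η₂v) ∂₁C(x, y) φ(u) φ(v)`. For `η₁, η₂ ≤ D/4` this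
integrand vanishes unless `x` and `y` lie in the compact `D/4`-neighbourhood `K` of `supp f`, on
which `|∂₁C(x, y)| ≤ |x - y|⁻¹ + M`. Since `d ≥ 2`, `|x - y|⁻¹` is integrable on `K × K`, so
dominated convergence applies as `η → 0`, and `∫ φ = 1` integrates out `u` and `v`.
-/

open MeasureTheory Filter Set Metric Function
open scoped ContDiff Topology Classical Pointwise

section Shear

def MeasurableEquiv.addShear {α β : Type*} [MeasurableSpace α] [MeasurableSpace β] [AddGroup β]
    [MeasurableAdd₂ β] [MeasurableNeg β] {s : α → β} (hs : Measurable s) : α × β ≃ᵐ α × β where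
  toFun p := (p.1, p.2 + s p.1)
  invFun p := (p.1, p.2 - s p.1)
  left_inv p := by simp
  right_inv p := by simp
  measurable_toFun := measurable_fst.prodMk (measurable_snd.add (hs.comp measurable_fst))
  measurable_invFun := measurable_fst.prodMk (measurable_snd.sub (hs.comp measurable_fst))

variable {α β F : Type*} [MeasurableSpace α] [MeasurableSpace β] [AddGroup β] [MeasurableAdd₂ β]
  [MeasurableNeg β] {μ : Measure α} {ν : Measure β} [SFinite μ] [SFinite ν]
  [ν.IsAddRightInvariant] {s : α → β}

theorem MeasurableEquiv.measurePreserving_addShear (hs : Measurable s) :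
    MeasurePreserving (addShear hs) (μ.prod ν) (μ.prod ν) :=
  (MeasurePreserving.id μ).skew_product (g := fun w z => z + s w) (by fun_prop)
    (ae_of_all _ fun w => map_add_right_eq_self ν (s w))

theorem integral_comp_prod_add_shear [NormedAddCommGroup F] [NormedSpace ℝ F]
    (hs : Measurable s) (G : α × β → F) :
    ∫ p, G (p.1, p.2 + s p.1) ∂(μ.prod ν) = ∫ p, G p ∂(μ.prod ν) :=
  (MeasurableEquiv.measurePreserving_addShear hs).integral_comp' G

theorem integrable_comp_prod_add_shear_iff [NormedAddCommGroup F] (hs : Measurable s)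
    {G : α × β → F} :
    Integrable (fun p => G (p.1, p.2 + s p.1)) (μ.prod ν) ↔ Integrable G (μ.prod ν) :=
  (MeasurableEquiv.measurePreserving_addShear hs).integrable_comp_emb
    (MeasurableEquiv.addShear hs).measurableEmbedding

end Shear

theorem locallyIntegrable_inv_norm {E : Type*} [NormedAddCommGroup E] [NormedSpace ℝ E]
    [FiniteDimensional ℝ E] [MeasurableSpace E] [BorelSpace E] (μ : Measure E)
    [μ.IsAddHaarMeasure] (hE : 2 ≤ Module.finrank ℝ E) :
    LocallyIntegrable (fun x : E => ‖x‖⁻¹) μ :=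
  locallyIntegrable_of_norm_le_rpow (C := 1) (α := 1) (by omega) (by exact_mod_cast hE)
    (ae_of_all _ fun x => by simp [Real.rpow_neg_one]) measurable_norm.inv.aestronglyMeasurable

theorem MeasureTheory.LocallyIntegrable.integrableOn_prod_comp_sub {G F : Type*}
    [NormedAddCommGroup G] [MeasurableSpace G] [BorelSpace G] [SecondCountableTopology G]
    [NormedAddCommGroup F] [NormedSpace ℝ F] {μ : Measure G} [SFinite μ]
    [μ.IsAddRightInvariant] [IsFiniteMeasureOnCompacts μ] {h : G → F}
    (hh : LocallyIntegrable h μ) {K L : Set G} (hK : IsCompact K) (hL : IsCompact L) :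
    IntegrableOn (fun q : G × G => h (q.1 - q.2)) (K ×ˢ L) (μ.prod μ) := by
  have hKL : IsCompact (K - L) := by simpa [sub_eq_add_neg] using hK.add hL.neg
  -- on `K × L` the integrand is the convolution integrand of `1_L` and `1_{K - L} • h`
  have hconv := ((integrableOn_const (C := (1 : ℝ)) (hL.measure_lt_top (μ := μ)).ne
    ).integrable_indicator hL.measurableSet).convolution_integrand
    (ContinuousLinearMap.lsmul ℝ ℝ)
    ((hh.integrableOn_isCompact hKL).integrable_indicator hKL.measurableSet)
  refine hconv.integrableOn.congr_fun (fun q hq => ?_) (hK.prod hL).measurableSet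
  simp [indicator_of_mem hq.2, indicator_of_mem (sub_mem_sub hq.1 hq.2)]

section PartialDerivative

variable {E F G : Type*} [NormedAddCommGroup E] [NormedSpace ℝ E] [NormedAddCommGroup F]
  [NormedSpace ℝ F] [NormedAddCommGroup G] [NormedSpace ℝ G] {g : E → F → G}

theorem fderiv_partial_fst_eq_comp_inl {x : E} {y : F}
    (hg : DifferentiableAt ℝ (fun q : E × F => g q.1 q.2) (x, y)) :
    fderiv ℝ (fun x' => g x' y) x
      = (fderiv ℝ (fun q : E × F => g q.1 q.2) (x, y)).comp (ContinuousLinearMap.inl ℝ E F) := by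
  have hinl := hasFDerivAt_prodMk_left (𝕜 := ℝ) x y
  exact (hg.hasFDerivAt.comp x hinl).fderiv

theorem exists_bound_fderiv_partial_fst_of_contDiffOn {V S : Set (E × F)} (hV : IsOpen V)
    (hg : ContDiffOn ℝ 1 (fun q : E × F => g q.1 q.2) V) (hS : IsCompact S) (hSV : S ⊆ V) :
    ∃ M, ∀ p ∈ S, ‖fderiv ℝ (fun x => g x p.2) p.1‖ ≤ M := by
  obtain ⟨M, hM⟩ := hS.exists_bound_of_continuousOn
    ((hg.continuousOn_fderiv_of_isOpen hV le_rfl).mono hSV)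
  refine ⟨M, fun p hp => ?_⟩
  rw [fderiv_partial_fst_eq_comp_inl (x := p.1) (y := p.2)
    ((hg.contDiffAt (hV.mem_nhds (hSV hp))).differentiableAt one_ne_zero)]
  calc _ ≤ ‖fderiv ℝ (fun q : E × F => g q.1 q.2) p‖ * ‖ContinuousLinearMap.inl ℝ E F‖ :=
        ContinuousLinearMap.opNorm_comp_le _ _
    _ ≤ M * 1 := by
        gcongr
        exacts [(norm_nonneg _).trans (hM p hp), hM p hp,
          ContinuousLinearMap.norm_inl_le_one ℝ E F]
    _ = M := mul_one M

end PartialDerivative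

section LogKernel

variable {ι : Type*} [Fintype ι]

theorem EuclideanSpace.abs_sub_apply_div_dist_sq_le (x y : EuclideanSpace ℝ ι) (i : ι) :
    |(x i - y i) / dist x y ^ 2| ≤ ‖x - y‖⁻¹ := by
  rcases eq_or_ne x y with rfl | hxy
  · simp
  have hpos : 0 < ‖x - y‖ := norm_pos_iff.mpr (sub_ne_zero.mpr hxy)
  rw [dist_eq_norm, abs_div, abs_pow, abs_norm, div_le_iff₀ (by positivity)]
  calc |x i - y i| ≤ ‖x - y‖ := by simpa using PiLp.norm_apply_le (x - y) i
    _ = ‖x - y‖⁻¹ * ‖x - y‖ ^ 2 := by field_simp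

variable [DecidableEq ι]

/-- `∂C/∂xᵢ` for `C(x, y) = log (1 / |x - y|) + g(x, y)`, extended by `0` off
`{x ∈ U, y ∈ U, x ≠ y}`. -/
noncomputable def logKernelPartialDeriv (U : Set (EuclideanSpace ℝ ι))
    (g : EuclideanSpace ℝ ι → EuclideanSpace ℝ ι → ℝ) (i : ι) (x y : EuclideanSpace ℝ ι) : ℝ :=
  if x ∈ U ∧ y ∈ U ∧ x ≠ y then
    -((x i - y i) / dist x y ^ 2) + fderiv ℝ (fun x' => g x' y) x (EuclideanSpace.single i 1)
  else 0

variable {U : Set (EuclideanSpace ℝ ι)} {g : EuclideanSpace ℝ ι → EuclideanSpace ℝ ι → ℝ}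

theorem measurable_logKernelPartialDeriv (hU : IsOpen U)
    (hg : ContDiffOn ℝ 1 (fun q : EuclideanSpace ℝ ι × EuclideanSpace ℝ ι => g q.1 q.2) (U ×ˢ U))
    (i : ι) : Measurable (uncurry (logKernelPartialDeriv U g i)) := by
  have hS : MeasurableSet
      {p : EuclideanSpace ℝ ι × EuclideanSpace ℝ ι | p.1 ∈ U ∧ p.2 ∈ U ∧ p.1 ≠ p.2} :=
    (hU.measurableSet.preimage measurable_fst).inter
      ((hU.measurableSet.preimage measurable_snd).inter measurableSet_diagonal.compl)
  have heq : uncurry (logKernelPartialDeriv U g i) = fun p =>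
      if p.1 ∈ U ∧ p.2 ∈ U ∧ p.1 ≠ p.2 then -((p.1 i - p.2 i) / dist p.1 p.2 ^ 2) +
        fderiv ℝ (fun q : EuclideanSpace ℝ ι × EuclideanSpace ℝ ι => g q.1 q.2) p
          (EuclideanSpace.single i 1, 0) else 0 := by
    ext p
    simp only [uncurry, logKernelPartialDeriv]
    split_ifs with hp
    · rw [fderiv_partial_fst_eq_comp_inl (x := p.1) (y := p.2) ((hg.contDiffAt
        ((hU.prod hU).mem_nhds ⟨hp.1, hp.2.1⟩)).differentiableAt one_ne_zero)]
      rfl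
    · rfl
  rw [heq]
  exact Measurable.ite hS (by fun_prop) measurable_const

theorem integrableOn_logKernelPartialDeriv (hι : 2 ≤ Fintype.card ι) (hU : IsOpen U)
    (hg : ContDiffOn ℝ 1 (fun q : EuclideanSpace ℝ ι × EuclideanSpace ℝ ι => g q.1 q.2) (U ×ˢ U))
    (i : ι) {K : Set (EuclideanSpace ℝ ι)} (hK : IsCompact K) (hKU : K ⊆ U) :
    IntegrableOn (uncurry (logKernelPartialDeriv U g i)) (K ×ˢ K) := by
  obtain ⟨M, hM⟩ := exists_bound_fderiv_partial_fst_of_contDiffOn (hU.prod hU) hg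
    (hK.prod hK) (prod_mono hKU hKU)
  have hdom : IntegrableOn (fun q : EuclideanSpace ℝ ι × EuclideanSpace ℝ ι =>
      ‖q.1 - q.2‖⁻¹ + max M 0) (K ×ˢ K) :=
    ((locallyIntegrable_inv_norm (E := EuclideanSpace ℝ ι) volume (by simpa using hι)).add
      (locallyIntegrable_const _)).integrableOn_prod_comp_sub hK hK
  refine hdom.mono' (measurable_logKernelPartialDeriv hU hg i).aestronglyMeasurable
    (ae_restrict_of_forall_mem (hK.prod hK).measurableSet fun q hq => ?_)
  simp only [uncurry, logKernelPartialDeriv]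
  split_ifs
  · calc _ ≤ |(q.1 i - q.2 i) / dist q.1 q.2 ^ 2|
          + ‖fderiv ℝ (fun x => g x q.2) q.1 (EuclideanSpace.single i 1)‖ := by
          simpa using norm_add_le (-((q.1 i - q.2 i) / dist q.1 q.2 ^ 2)) _
      _ ≤ ‖q.1 - q.2‖⁻¹ + max M 0 := by
          gcongr
          · exact EuclideanSpace.abs_sub_apply_div_dist_sq_le _ _ _
          · calc _ ≤ ‖fderiv ℝ (fun x => g x q.2) q.1‖ * ‖EuclideanSpace.single i (1 : ℝ)‖ :=
                  ContinuousLinearMap.le_opNorm _ _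
              _ ≤ M := by simpa using hM q hq
              _ ≤ max M 0 := le_max_left _ _
  · simp only [norm_zero]
    positivity

end LogKernel

section Mollification

theorem integrable_mul_prod_indicator_norm {X : Type*} [MeasurableSpace X] {μ : Measure X}
    [SFinite μ] {φ : X → ℝ} {k : X → X → ℝ} {K : Set X} (hφ : Integrable φ μ)
    (hk : IntegrableOn (uncurry k) (K ×ˢ K) (μ.prod μ)) (hK : MeasurableSet K) (c : ℝ) :
    Integrable (fun p : (X × X) × X × X =>
      c * (‖φ p.1.1‖ * ‖φ p.1.2‖ * (K ×ˢ K).indicator (fun q => ‖k q.1 q.2‖) p.2))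
      ((μ.prod μ).prod (μ.prod μ)) :=
  ((hφ.norm.mul_prod hφ.norm).mul_prod
    (IntegrableOn.integrable_indicator hk.norm (hK.prod hK))).const_mul c

theorem integral_mul_prod_eq_of_integral_eq_one {X : Type*} [MeasurableSpace X] {μ : Measure X}
    [SFinite μ] {φ : X → ℝ} (hφ : ∫ z, φ z ∂μ = 1) (F : X × X → ℝ) :
    ∫ p : (X × X) × X × X, F p.2 * φ p.1.1 * φ p.1.2 ∂((μ.prod μ).prod (μ.prod μ))
      = ∫ q, F q ∂(μ.prod μ) := by
  have hφφ : ∫ w : X × X, φ w.1 * φ w.2 ∂(μ.prod μ) = 1 := by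
    rw [integral_prod_mul, hφ, one_mul]
  calc _ = ∫ p : (X × X) × X × X, (φ p.1.1 * φ p.1.2) * F p.2
          ∂((μ.prod μ).prod (μ.prod μ)) := by
        congr 1; ext p; ring
    _ = _ := by rw [integral_prod_mul (fun w : X × X => φ w.1 * φ w.2) F, hφφ, one_mul]

variable {E : Type*} [NormedAddCommGroup E] [NormedSpace ℝ E] {a b φ : E → ℝ} {k : E → E → ℝ}
  {S : Set E} {A B δ η₁ η₂ : ℝ}

theorem norm_comp_add_smul_mul_le_indicator (haA : ∀ z, ‖a z‖ ≤ A)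
    (hφ : support φ ⊆ closedBall 0 1) (haS : support a ⊆ S) {η : ℝ} (hη : |η| ≤ δ) (x u : E) :
    ‖a (x + η • u) * φ u‖ ≤ A * (cthickening δ S).indicator 1 x * ‖φ u‖ := by
  by_cases hx : x ∈ cthickening δ S
  · simpa [indicator_of_mem hx, norm_mul] using
      mul_le_mul_of_nonneg_right (haA (x + η • u)) (norm_nonneg (φ u))
  suffices a (x + η • u) * φ u = 0 by simp [this, indicator_of_notMem hx]
  by_contra hne
  have hu : ‖u‖ ≤ 1 := mem_closedBall_zero_iff.mp (hφ (right_ne_zero_of_mul hne))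
  refine hx (mem_cthickening_of_dist_le x _ δ S (haS (left_ne_zero_of_mul hne)) ?_)
  calc dist x (x + η • u) = |η| * ‖u‖ := by
        rw [dist_eq_norm, sub_add_cancel_left, norm_neg, norm_smul, Real.norm_eq_abs]
    _ ≤ δ * 1 := by gcongr; exact (abs_nonneg η).trans hη
    _ = δ := mul_one δ

theorem norm_sheared_integrand_le (haA : ∀ z, ‖a z‖ ≤ A) (hbB : ∀ z, ‖b z‖ ≤ B)
    (hφ : support φ ⊆ closedBall 0 1) (haS : support a ⊆ S) (hbS : support b ⊆ S)
    (h₁ : |η₁| ≤ δ) (h₂ : |η₂| ≤ δ) (p : (E × E) × E × E) :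
    ‖a (p.2.1 + η₁ • p.1.1) * b (p.2.2 + η₂ • p.1.2) * k p.2.1 p.2.2 * φ p.1.1 * φ p.1.2‖
      ≤ A * B * (‖φ p.1.1‖ * ‖φ p.1.2‖ *
        (cthickening δ S ×ˢ cthickening δ S).indicator (fun q => ‖k q.1 q.2‖) p.2) := by
  obtain ⟨⟨u, v⟩, x, y⟩ := p
  set K := cthickening δ S
  have hx := norm_comp_add_smul_mul_le_indicator haA hφ haS h₁ x u
  have hy := norm_comp_add_smul_mul_le_indicator hbB hφ hbS h₂ y v
  have hind : (K ×ˢ K).indicator (fun q => ‖k q.1 q.2‖) (x, y)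
      = K.indicator 1 x * K.indicator 1 y * ‖k x y‖ := by
    by_cases hxK : x ∈ K <;> by_cases hyK : y ∈ K <;> simp [hxK, hyK]
  calc _ = ‖a (x + η₁ • u) * φ u‖ * ‖b (y + η₂ • v) * φ v‖ * ‖k x y‖ := by
        simp only [norm_mul]; ring
    _ ≤ (A * K.indicator 1 x * ‖φ u‖) * (B * K.indicator 1 y * ‖φ v‖) * ‖k x y‖ :=
        mul_le_mul_of_nonneg_right
          (mul_le_mul hx hy (norm_nonneg _) ((norm_nonneg _).trans hx)) (norm_nonneg _)
    _ = _ := by rw [hind]; ring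

variable [MeasurableSpace E] [BorelSpace E] [SecondCountableTopology E] {μ : Measure E}

theorem aestronglyMeasurable_sheared_integrand (ha : Continuous a) (hb : Continuous b)
    (hφ : AEStronglyMeasurable φ μ) (hk : AEStronglyMeasurable (uncurry k) (μ.prod μ)) :
    AEStronglyMeasurable (fun p : (E × E) × E × E =>
      a (p.2.1 + η₁ • p.1.1) * b (p.2.2 + η₂ • p.1.2) * k p.2.1 p.2.2 * φ p.1.1 * φ p.1.2)
      ((μ.prod μ).prod (μ.prod μ)) :=
  ((((ha.comp (by fun_prop)).aestronglyMeasurable.mul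
    (hb.comp (by fun_prop)).aestronglyMeasurable).mul hk.comp_snd).mul
    hφ.comp_fst.comp_fst).mul (hφ.comp_snd.comp_fst)

variable [SFinite μ]

theorem integrable_sheared_integrand (ha : Continuous a) (hb : Continuous b)
    (haA : ∀ z, ‖a z‖ ≤ A) (hbB : ∀ z, ‖b z‖ ≤ B) (hφ : Integrable φ μ)
    (hφsupp : support φ ⊆ closedBall 0 1) (haS : support a ⊆ S) (hbS : support b ⊆ S)
    (hkm : AEStronglyMeasurable (uncurry k) (μ.prod μ))
    (hk : IntegrableOn (uncurry k) (cthickening δ S ×ˢ cthickening δ S) (μ.prod μ))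
    (h₁ : |η₁| ≤ δ) (h₂ : |η₂| ≤ δ) :
    Integrable (fun p : (E × E) × E × E =>
      a (p.2.1 + η₁ • p.1.1) * b (p.2.2 + η₂ • p.1.2) * k p.2.1 p.2.2 * φ p.1.1 * φ p.1.2)
      ((μ.prod μ).prod (μ.prod μ)) :=
  (integrable_mul_prod_indicator_norm hφ hk isClosed_cthickening.measurableSet (A * B)).mono'
    (aestronglyMeasurable_sheared_integrand ha hb hφ.aestronglyMeasurable hkm)
    (ae_of_all _ (norm_sheared_integrand_le haA hbB hφsupp haS hbS h₁ h₂))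

theorem tendsto_integral_sheared_integrand (ha : Continuous a) (hb : Continuous b)
    (haA : ∀ z, ‖a z‖ ≤ A) (hbB : ∀ z, ‖b z‖ ≤ B) (hφ : Integrable φ μ) (hφ1 : ∫ z, φ z ∂μ = 1)
    (hφsupp : support φ ⊆ closedBall 0 1) (haS : support a ⊆ S) (hbS : support b ⊆ S)
    (hkm : AEStronglyMeasurable (uncurry k) (μ.prod μ))
    (hk : IntegrableOn (uncurry k) (cthickening δ S ×ˢ cthickening δ S) (μ.prod μ))
    (hδ : 0 < δ) :
    Tendsto (fun η : ℝ × ℝ => ∫ p : (E × E) × E × E,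
        a (p.2.1 + η.1 • p.1.1) * b (p.2.2 + η.2 • p.1.2) * k p.2.1 p.2.2 * φ p.1.1 * φ p.1.2
          ∂((μ.prod μ).prod (μ.prod μ)))
      (𝓝 0) (𝓝 (∫ q, a q.1 * b q.2 * k q.1 q.2 ∂(μ.prod μ))) := by
  rw [← integral_mul_prod_eq_of_integral_eq_one hφ1]
  have hsmall : ∀ᶠ η : ℝ × ℝ in 𝓝 0, |η.1| ≤ δ ∧ |η.2| ≤ δ := by
    filter_upwards [closedBall_mem_nhds (0 : ℝ × ℝ) hδ] with η hη
    simpa [Prod.norm_def] using hη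
  refine tendsto_integral_filter_of_dominated_convergence _
    (Eventually.of_forall fun _ => aestronglyMeasurable_sheared_integrand ha hb
      hφ.aestronglyMeasurable hkm)
    (hsmall.mono fun η hη => ae_of_all _
      (norm_sheared_integrand_le haA hbB hφsupp haS hbS hη.1 hη.2))
    (integrable_mul_prod_indicator_norm hφ hk isClosed_cthickening.measurableSet (A * B))
    (ae_of_all _ fun p => ?_)
  have hcont : Continuous fun η : ℝ × ℝ =>
      a (p.2.1 + η.1 • p.1.1) * b (p.2.2 + η.2 • p.1.2) * k p.2.1 p.2.2 * φ p.1.1 * φ p.1.2 := by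
    fun_prop
  simpa using hcont.tendsto 0

variable [μ.IsAddRightInvariant]

theorem integrable_mollified_integrand (ha : Continuous a) (hb : Continuous b)
    (haA : ∀ z, ‖a z‖ ≤ A) (hbB : ∀ z, ‖b z‖ ≤ B) (hφ : Integrable φ μ)
    (hφsupp : support φ ⊆ closedBall 0 1) (haS : support a ⊆ S) (hbS : support b ⊆ S)
    (hkm : AEStronglyMeasurable (uncurry k) (μ.prod μ))
    (hk : IntegrableOn (uncurry k) (cthickening δ S ×ˢ cthickening δ S) (μ.prod μ))
    (h₁ : |η₁| ≤ δ) (h₂ : |η₂| ≤ δ) :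
    Integrable (fun p : (E × E) × E × E =>
      a p.2.1 * b (p.2.2 + η₂ • p.1.2) * k (p.2.1 - η₁ • p.1.1) p.2.2 * φ p.1.1 * φ p.1.2)
      ((μ.prod μ).prod (μ.prod μ)) := by
  rw [← integrable_comp_prod_add_shear_iff (s := fun w : E × E => (η₁ • w.1, (0 : E)))
    (by fun_prop)]
  simpa using integrable_sheared_integrand ha hb haA hbB hφ hφsupp haS hbS hkm hk h₁ h₂

theorem tendsto_integral_mollified_integrand (ha : Continuous a) (hb : Continuous b)
    (haA : ∀ z, ‖a z‖ ≤ A) (hbB : ∀ z, ‖b z‖ ≤ B) (hφ : Integrable φ μ) (hφ1 : ∫ z, φ z ∂μ = 1)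
    (hφsupp : support φ ⊆ closedBall 0 1) (haS : support a ⊆ S) (hbS : support b ⊆ S)
    (hkm : AEStronglyMeasurable (uncurry k) (μ.prod μ))
    (hk : IntegrableOn (uncurry k) (cthickening δ S ×ˢ cthickening δ S) (μ.prod μ))
    (hδ : 0 < δ) :
    Tendsto (fun η : ℝ × ℝ => ∫ p : (E × E) × E × E,
        a p.2.1 * b (p.2.2 + η.2 • p.1.2) * k (p.2.1 - η.1 • p.1.1) p.2.2 * φ p.1.1 * φ p.1.2
          ∂((μ.prod μ).prod (μ.prod μ)))
      (𝓝 0) (𝓝 (∫ q, a q.1 * b q.2 * k q.1 q.2 ∂(μ.prod μ))) := by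
  refine (tendsto_integral_sheared_integrand ha hb haA hbB hφ hφ1 hφsupp haS hbS hkm hk
    hδ).congr fun η => ?_
  symm
  rw [← integral_comp_prod_add_shear (s := fun w : E × E => (η.1 • w.1, (0 : E))) (by fun_prop)]
  simp

end Mollification

/-- **Convergence of the mollified quadruple integral.**
With `C(x,y) = log(1/|x−y|) + g(x,y)` for `g ∈ C²(U × U)`, `∂₁C` its partial derivative
in the first coordinate of the first variable (extended by `0` outside its domain of
definition), `φ` a mollifier supported in the annulus `B(0,1) ∖ B(0,1/2)` with `∫φ = 1`,
and `f` smooth compactly supported on `U`: the quadruple integrals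
`J(η₁,η₂) = ∫∫∫∫ f(x) (∂₁f)(y+η₂v) ∂₁C(x−η₁u, y) φ(u) φ(v) du dv dx dy`, defined for
`0 < η₁, η₂ < dist(supp f, Uᶜ)/4` (the distance being encoded by `D`), converge to
`∫∫ f(x) (∂₁f)(y) ∂₁C(x,y) dx dy` as `(η₁, η₂) → (0,0)`. -/
theorem stmt15 (d : ℕ) (hd : 2 ≤ d)
    (U : Set (EuclideanSpace ℝ (Fin d))) (hU : IsOpen U)
    (g : EuclideanSpace ℝ (Fin d) → EuclideanSpace ℝ (Fin d) → ℝ)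
    (hg : ContDiffOn ℝ 2
      (fun p : EuclideanSpace ℝ (Fin d) × EuclideanSpace ℝ (Fin d) => g p.1 p.2) (U ×ˢ U))
    (C₁ : EuclideanSpace ℝ (Fin d) → EuclideanSpace ℝ (Fin d) → ℝ)
    (hC₁ : ∀ x y, C₁ x y = if x ∈ U ∧ y ∈ U ∧ x ≠ y then
      -((x ⟨0, by omega⟩ - y ⟨0, by omega⟩) / dist x y ^ 2)
        + fderiv ℝ (fun x' => g x' y) x (EuclideanSpace.single ⟨0, by omega⟩ 1) else 0)
    (φ : EuclideanSpace ℝ (Fin d) → ℝ) (hφ : ContDiff ℝ ∞ φ)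
    (hφsupp : tsupport φ ⊆ Metric.closedBall 0 1 \ Metric.ball 0 (1/2))
    (hφint : ∫ z, φ z = 1)
    (f : EuclideanSpace ℝ (Fin d) → ℝ)
    (hf : ContDiff ℝ ∞ f) (hfc : HasCompactSupport f)
    (D : ℝ) (hD : 0 < D)
    (hDU : ∀ x ∈ tsupport f, ∀ z : EuclideanSpace ℝ (Fin d), dist z x < D → z ∈ U) :
    (∀ η₁ ∈ Set.Ioo (0:ℝ) (D / 4), ∀ η₂ ∈ Set.Ioo (0:ℝ) (D / 4),
      Integrable (fun p : (EuclideanSpace ℝ (Fin d) × EuclideanSpace ℝ (Fin d)) ×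
          EuclideanSpace ℝ (Fin d) × EuclideanSpace ℝ (Fin d) =>
        f p.2.1 * fderiv ℝ f (p.2.2 + η₂ • p.1.2) (EuclideanSpace.single ⟨0, by omega⟩ 1)
          * C₁ (p.2.1 - η₁ • p.1.1) p.2.2 * φ p.1.1 * φ p.1.2) volume) ∧
    Tendsto (fun η : ℝ × ℝ =>
        ∫ p : (EuclideanSpace ℝ (Fin d) × EuclideanSpace ℝ (Fin d)) ×
            EuclideanSpace ℝ (Fin d) × EuclideanSpace ℝ (Fin d),
          f p.2.1 * fderiv ℝ f (p.2.2 + η.2 • p.1.2) (EuclideanSpace.single ⟨0, by omega⟩ 1)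
            * C₁ (p.2.1 - η.1 • p.1.1) p.2.2 * φ p.1.1 * φ p.1.2)
      ((𝓝[>] (0:ℝ)) ×ˢ (𝓝[>] (0:ℝ)))
      (𝓝 (∫ q : EuclideanSpace ℝ (Fin d) × EuclideanSpace ℝ (Fin d),
        f q.1 * fderiv ℝ f q.2 (EuclideanSpace.single ⟨0, by omega⟩ 1) * C₁ q.1 q.2)) := by
  obtain rfl : C₁ = logKernelPartialDeriv U g ⟨0, by omega⟩ := funext₂ hC₁
  set e : EuclideanSpace ℝ (Fin d) := EuclideanSpace.single ⟨0, by omega⟩ 1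
  have hK : IsCompact (cthickening (D / 4) (tsupport f)) := hfc.cthickening
  have hKU : cthickening (D / 4) (tsupport f) ⊆ U := by
    rw [hfc.isCompact.cthickening_eq_biUnion_closedBall (by positivity)]
    exact iUnion₂_subset fun x hx z hz => hDU x hx z (by rw [mem_closedBall] at hz; linarith)
  have hg₁ : ContDiffOn ℝ 1 _ _ := hg.of_le (by norm_num)
  have hk := integrableOn_logKernelPartialDeriv (by simpa using hd) hU hg₁ ⟨0, by omega⟩ hK hKU
  have hkm := (measurable_logKernelPartialDeriv hU hg₁ ⟨0, by omega⟩).aestronglyMeasurable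
    (μ := volume)
  have hdf : Continuous fun y => fderiv ℝ f y e :=
    (hf.continuous_fderiv (by simp)).clm_apply continuous_const
  have hdfS : support (fun y => fderiv ℝ f y e) ⊆ tsupport f :=
    (subset_tsupport _).trans (tsupport_fderiv_apply_subset ℝ e)
  obtain ⟨A, hA⟩ := hfc.exists_bound_of_continuous hf.continuous
  obtain ⟨B, hB⟩ := (hfc.fderiv_apply ℝ e).exists_bound_of_continuous hdf
  have hφball : tsupport φ ⊆ closedBall 0 1 := hφsupp.trans sdiff_subset
  have hφi : Integrable φ := hφ.continuous.integrable_of_hasCompactSupport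
    ((isCompact_closedBall 0 1).of_isClosed_subset (isClosed_tsupport φ) hφball)
  have hφball' : support φ ⊆ closedBall 0 1 := (subset_tsupport φ).trans hφball
  refine ⟨fun η₁ h₁ η₂ h₂ => integrable_mollified_integrand (b := fun y => fderiv ℝ f y e)
    hf.continuous hdf hA hB hφi hφball' (subset_tsupport f) hdfS hkm hk
    ((abs_of_pos h₁.1).trans_le h₁.2.le) ((abs_of_pos h₂.1).trans_le h₂.2.le), ?_⟩
  rw [← nhdsWithin_prod_eq]
  exact tendsto_nhdsWithin_of_tendsto_nhds (tendsto_integral_mollified_integrand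
    (b := fun y => fderiv ℝ f y e) hf.continuous hdf hA hB hφi hφint hφball' (subset_tsupport f)
    hdfS hkm hk (by positivity))
end

section
/- Suppose that: (i) there is M ≥ 0 with ‖H_n‖ ≤ M for all n; (ii) there are a real number c and complex numbers c_{n,m} (defined for n > m ≥ 1) such that |⟨H_n, H_m⟩ − c_{n,m}| ≤ M ε_n^a ε_m^{−b} for all n > m, and such that for every δ > 0 there exists N₀ with |c_{n,m} − c| < δ whenever n > m ≥ N₀. Then ‖(1/N) ∑_{n=1}^N H_n‖² → c as N → ∞. -/
open Filter Finset
open scoped Topology InnerProductSpace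

/-!
Expanding the square, `‖N⁻¹ ∑ H_n‖² - c` is the average over the `N²` pairs `(n, m)` of
`⟪H_n, H_m⟫ - c`. For `m < n` this is at most `M q^m + ‖c_{n,m} - c‖` with
`q = 2^{-(aK - b)(K - 1)} < 1`, because `a K^n - b K^m ≥ (aK - b) K^m ≥ (aK - b)(K - 1) m`; so it
is small once `n ≠ m` are both large. The remaining pairs (the diagonal and the `O(N)` pairs
with a small index) are bounded by `M² + |c|` and make up a vanishing proportion of all pairs.
-/

lemma rpow_neg_pow_mul_rpow_neg_pow_le {a b K : ℝ} (ha : 0 < a) (hK : 1 < K) (hbK : b < a * K)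
    {m n : ℕ} (hmn : m < n) :
    ((2:ℝ) ^ (-(K ^ n))) ^ a * ((2:ℝ) ^ (-(K ^ m))) ^ (-b)
      ≤ ((2:ℝ) ^ (-((a * K - b) * (K - 1)))) ^ m := by
  rw [← Real.rpow_natCast (2 ^ _ : ℝ) m, ← Real.rpow_mul zero_le_two,
    ← Real.rpow_mul zero_le_two, ← Real.rpow_mul zero_le_two, ← Real.rpow_add two_pos,
    Real.rpow_le_rpow_left_iff one_lt_two]
  have hbernoulli : 1 + (m:ℝ) * (K - 1) ≤ K ^ m := by
    simpa using one_add_mul_le_pow (by linarith : (-2:ℝ) ≤ K - 1) m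
  have hpow : K * K ^ m ≤ K ^ n := by
    rw [← pow_succ']; exact pow_le_pow_right₀ hK.le hmn
  nlinarith [mul_le_mul_of_nonneg_left hpow ha.le,
    mul_pos (pow_pos (zero_lt_one.trans hK) m) (sub_pos.2 hbK)]

section InnerProduct

variable {𝕜 E ι : Type*} [RCLike 𝕜] [NormedAddCommGroup E] [InnerProductSpace 𝕜 E]

lemma norm_inner_sub_ofReal_comm (x y : E) (c : ℝ) :
    ‖⟪x, y⟫_𝕜 - c‖ = ‖⟪y, x⟫_𝕜 - c‖ := by
  rw [← inner_conj_symm, ← RCLike.conj_ofReal c, ← map_sub, RCLike.norm_conj,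
    RCLike.conj_ofReal]

lemma abs_norm_sq_average_sub_le {s : Finset ι} (hs : s.Nonempty) (x : ι → E) (c : ℝ) :
    |‖(#s : 𝕜)⁻¹ • ∑ i ∈ s, x i‖ ^ 2 - c|
      ≤ ((#s : ℝ) ^ 2)⁻¹ * ∑ p ∈ s ×ˢ s, ‖⟪x p.1, x p.2⟫_𝕜 - c‖ := by
  set S := ∑ i ∈ s, x i
  have hN : (0:ℝ) < #s := by exact_mod_cast hs.card_pos
  have hexpand : ((‖S‖ ^ 2 - (#s : ℝ) ^ 2 * c : ℝ) : 𝕜)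
      = ∑ p ∈ s ×ˢ s, (⟪x p.1, x p.2⟫_𝕜 - c) := by
    rw [sum_sub_distrib, sum_const, card_product, sum_product, nsmul_eq_mul]
    simp only [← inner_sum, ← sum_inner]
    push_cast
    rw [← inner_self_eq_norm_sq_to_K]
    ring
  calc |‖(#s : 𝕜)⁻¹ • S‖ ^ 2 - c|
      = ((#s : ℝ) ^ 2)⁻¹ * |‖S‖ ^ 2 - (#s : ℝ) ^ 2 * c| := by
        rw [norm_smul, norm_inv, RCLike.norm_natCast, ← abs_of_pos (inv_pos.2 (pow_pos hN 2)),
          ← abs_mul]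
        congr 1
        field_simp
    _ ≤ ((#s : ℝ) ^ 2)⁻¹ * ∑ p ∈ s ×ˢ s, ‖⟪x p.1, x p.2⟫_𝕜 - c‖ := by
        gcongr
        rw [← RCLike.norm_ofReal (K := 𝕜), hexpand]
        exact norm_sum_le _ _

lemma norm_inner_sub_le_of_norm_le {x y : E} {M : ℝ} (hx : ‖x‖ ≤ M) (hy : ‖y‖ ≤ M) (c : 𝕜) :
    ‖⟪x, y⟫_𝕜 - c‖ ≤ M * M + ‖c‖ :=
  calc ‖⟪x, y⟫_𝕜 - c‖ ≤ ‖x‖ * ‖y‖ + ‖c‖ := (norm_sub_le _ _).trans (by grw [norm_inner_le_norm])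
    _ ≤ M * M + ‖c‖ := by
      have := (norm_nonneg x).trans hx
      grw [hx, hy]

end InnerProduct

lemma offDiag_le_of_norm_sub_le_geometric {F : Type*} [SeminormedAddCommGroup F]
    (u v : ℕ → ℕ → F) (c : F) {C q : ℝ} (hq0 : 0 ≤ q) (hq1 : q < 1)
    (huv : ∀ n m, 1 ≤ m → m < n → ‖u n m - v n m‖ ≤ C * q ^ m)
    (hv : ∀ δ > 0, ∃ N₀ : ℕ, ∀ n m, N₀ ≤ m → m < n → ‖v n m - c‖ < δ) :
    ∀ δ > 0, ∃ N₀ : ℕ, ∀ n m, N₀ ≤ m → m < n → ‖u n m - c‖ ≤ δ := by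
  intro δ hδ
  have hgeom : Tendsto (fun m => C * q ^ m) atTop (𝓝 0) := by
    simpa using (tendsto_pow_atTop_nhds_zero_of_lt_one hq0 hq1).const_mul C
  obtain ⟨N₁, hN₁⟩ := eventually_atTop.1 <| hgeom.eventually (gt_mem_nhds (half_pos hδ))
  obtain ⟨N₂, hN₂⟩ := hv (δ / 2) (half_pos hδ)
  refine ⟨max (max N₁ N₂) 1, fun n m hm hmn => ?_⟩
  simp only [max_le_iff] at hm
  calc ‖u n m - c‖ ≤ ‖u n m - v n m‖ + ‖v n m - c‖ := norm_sub_le_norm_sub_add_norm_sub _ _ _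
    _ ≤ δ := by linarith [huv n m hm.2 hmn, hN₁ m hm.1.1, hN₂ n m hm.1.2 hmn]

lemma sum_product_le_of_le_offDiag (s : Finset ℕ) (w : ℕ → ℕ → ℝ) {B δ : ℝ} (N₀ : ℕ)
    (hB0 : 0 ≤ B) (hδ0 : 0 ≤ δ) (hB : ∀ n m, w n m ≤ B)
    (hδ : ∀ n m, N₀ ≤ n → N₀ ≤ m → n ≠ m → w n m ≤ δ) :
    ∑ p ∈ s ×ˢ s, w p.1 p.2 ≤ δ * #s ^ 2 + B * ((2 * N₀ + 1) * #s) := by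
  rw [← sum_filter_add_sum_filter_not (s ×ˢ s) (fun p => N₀ ≤ p.1 ∧ N₀ ≤ p.2 ∧ p.1 ≠ p.2)]
  have hfar : ∑ p ∈ s ×ˢ s with N₀ ≤ p.1 ∧ N₀ ≤ p.2 ∧ p.1 ≠ p.2, w p.1 p.2 ≤ δ * #s ^ 2 := by
    refine (sum_le_card_nsmul _ _ δ fun p hp => ?_).trans ?_
    · obtain ⟨-, h₁, h₂, hne⟩ := mem_filter.1 hp
      exact hδ _ _ h₁ h₂ hne
    · rw [nsmul_eq_mul, mul_comm]
      gcongr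
      exact_mod_cast (card_filter_le _ _).trans (card_product s s).le |>.trans_eq (sq _).symm
  have hnear_sub : {p ∈ s ×ˢ s | ¬(N₀ ≤ p.1 ∧ N₀ ≤ p.2 ∧ p.1 ≠ p.2)}
      ⊆ range N₀ ×ˢ s ∪ s ×ˢ range N₀ ∪ s.diag := by
    intro p hp
    simp only [mem_filter, mem_product, not_and_or, not_le, not_not] at hp
    simp only [mem_union, mem_product, mem_range, mem_diag]
    obtain ⟨⟨h₁, h₂⟩, h | h | h⟩ := hp
    exacts [Or.inl (Or.inl ⟨h, h₂⟩), Or.inl (Or.inr ⟨h₁, h⟩), Or.inr ⟨h₁, h⟩]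
  have hnear_card : #{p ∈ s ×ˢ s | ¬(N₀ ≤ p.1 ∧ N₀ ≤ p.2 ∧ p.1 ≠ p.2)} ≤ (2 * N₀ + 1) * #s := by
    refine (card_le_card hnear_sub).trans ((card_union_le _ _).trans ?_)
    grw [card_union_le]
    simp only [card_product, card_range, diag_card]
    exact le_of_eq (by ring)
  have hnear : ∑ p ∈ s ×ˢ s with ¬(N₀ ≤ p.1 ∧ N₀ ≤ p.2 ∧ p.1 ≠ p.2), w p.1 p.2
      ≤ B * ((2 * N₀ + 1) * #s) := by
    refine (sum_le_card_nsmul _ _ B fun p _ => hB _ _).trans ?_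
    rw [nsmul_eq_mul, mul_comm]
    gcongr
    exact_mod_cast hnear_card
  linarith

lemma tendsto_inv_sq_mul_sum_Icc_product_of_offDiag (w : ℕ → ℕ → ℝ) (B : ℝ)
    (hw0 : ∀ n m, 0 ≤ w n m) (hB : ∀ n m, w n m ≤ B) (hsymm : ∀ n m, w n m = w m n)
    (hsmall : ∀ δ > 0, ∃ N₀ : ℕ, ∀ n m, N₀ ≤ m → m < n → w n m ≤ δ) :
    Tendsto (fun N : ℕ => ((N : ℝ) ^ 2)⁻¹ * ∑ p ∈ Icc 1 N ×ˢ Icc 1 N, w p.1 p.2)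
      atTop (𝓝 0) := by
  rw [Metric.tendsto_atTop]
  intro δ hδ
  obtain ⟨N₀, hN₀⟩ := hsmall (δ / 2) (half_pos hδ)
  have hoffDiag : ∀ n m, N₀ ≤ n → N₀ ≤ m → n ≠ m → w n m ≤ δ / 2 := by
    intro n m hn hm hne
    rcases hne.lt_or_gt with h | h
    · exact hsymm n m ▸ hN₀ m n hn h
    · exact hN₀ n m hm h
  have hB0 : 0 ≤ B := (hw0 0 0).trans (hB 0 0)
  obtain ⟨N₁, hN₁⟩ := eventually_atTop.1 <|
    (tendsto_const_div_atTop_nhds_zero_nat (B * (2 * N₀ + 1))).eventually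
      (gt_mem_nhds (half_pos hδ))
  refine ⟨max N₁ 1, fun N hN => ?_⟩
  have hNpos : (0 : ℝ) < N := by exact_mod_cast (le_max_right _ _).trans hN
  have hsum := sum_product_le_of_le_offDiag (Icc 1 N) w N₀ hB0 (half_pos hδ).le hB hoffDiag
  rw [Nat.card_Icc, Nat.add_sub_cancel] at hsum
  have hsum_nonneg : 0 ≤ ∑ p ∈ Icc 1 N ×ˢ Icc 1 N, w p.1 p.2 := sum_nonneg fun p _ => hw0 _ _
  rw [Real.dist_eq, sub_zero, abs_of_nonneg (mul_nonneg (by positivity) hsum_nonneg)]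
  calc ((N : ℝ) ^ 2)⁻¹ * ∑ p ∈ Icc 1 N ×ˢ Icc 1 N, w p.1 p.2
      ≤ ((N : ℝ) ^ 2)⁻¹ * (δ / 2 * N ^ 2 + B * ((2 * N₀ + 1) * N)) := by gcongr
    _ = δ / 2 + B * (2 * N₀ + 1) / N := by field_simp
    _ < δ := by linarith [hN₁ N ((le_max_left _ _).trans hN)]

theorem stmt16_general {E : Type*} [NormedAddCommGroup E] [InnerProductSpace ℂ E]
    (H : ℕ → E) (a b : ℝ) (ha : 0 < a)
    (K : ℝ) (hK : max 1 (b / a) < K)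
    (ε : ℕ → ℝ) (hε : ∀ n, ε n = (2:ℝ) ^ (-(K ^ n)))
    (M : ℝ) (hM : 0 ≤ M) (hHbd : ∀ n, ‖H n‖ ≤ M)
    (c : ℝ) (cc : ℕ → ℕ → ℂ)
    (hcc : ∀ n m : ℕ, 1 ≤ m → m < n →
      ‖(inner ℂ (H n) (H m) : ℂ) - cc n m‖ ≤ M * ε n ^ a * ε m ^ (-b))
    (hlim : ∀ δ : ℝ, 0 < δ → ∃ N₀ : ℕ, ∀ n m : ℕ, N₀ ≤ m → m < n →
      ‖cc n m - (c : ℂ)‖ < δ) :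
    Tendsto (fun N : ℕ => ‖(N : ℂ)⁻¹ • ∑ n ∈ Finset.Icc 1 N, H n‖ ^ 2) atTop (𝓝 c) := by
  have hK1 : 1 < K := (le_max_left _ _).trans_lt hK
  have hbK : b < a * K := by
    have := (le_max_right _ _).trans_lt hK
    rwa [div_lt_iff₀ ha, mul_comm] at this
  have hq0 : (0 : ℝ) ≤ 2 ^ (-((a * K - b) * (K - 1))) := by positivity
  have hq1 : (2 : ℝ) ^ (-((a * K - b) * (K - 1))) < 1 :=
    Real.rpow_lt_one_of_one_lt_of_neg one_lt_two (by nlinarith)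
  have hsmall := offDiag_le_of_norm_sub_le_geometric (fun n m => ⟪H n, H m⟫_ℂ) cc c hq0 hq1
    (fun n m hm hmn => (hcc n m hm hmn).trans <| by
      rw [hε, hε, mul_assoc]
      exact mul_le_mul_of_nonneg_left (rpow_neg_pow_mul_rpow_neg_pow_le ha hK1 hbK hmn) hM) hlim
  refine tendsto_iff_norm_sub_tendsto_zero.2 <| squeeze_zero' (.of_forall fun _ => norm_nonneg _)
    ?_ (tendsto_inv_sq_mul_sum_Icc_product_of_offDiag _ _ (fun _ _ => norm_nonneg _)
      (fun n m => norm_inner_sub_le_of_norm_le (hHbd n) (hHbd m) _)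
      (fun n m => norm_inner_sub_ofReal_comm (H n) (H m) c) hsmall)
  filter_upwards [eventually_ge_atTop 1] with N hN
  have := abs_norm_sq_average_sub_le (𝕜 := ℂ) (nonempty_Icc.2 hN) H c
  rwa [Nat.card_Icc, Nat.add_sub_cancel] at this

/-- **Law of large numbers for the averaged approximations.**
Let `E` be a complex inner product space, `H : ℕ → E`, `a, b > 0`, `K > max(1, b/a)` and
`ε_n = 2^{−K^n}`. Suppose `‖H_n‖ ≤ M` for all `n`, and there are a real `c` and complex
`c_{n,m}` with `|⟨H_n, H_m⟩ − c_{n,m}| ≤ M ε_n^a ε_m^{−b}` for `n > m ≥ 1` and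
`c_{n,m} → c` as `n > m → ∞`. Then `‖(1/N) ∑_{n=1}^N H_n‖² → c` as `N → ∞`. -/
theorem stmt16 {E : Type*} [NormedAddCommGroup E] [InnerProductSpace ℂ E]
    (H : ℕ → E) (a b : ℝ) (ha : 0 < a) (hb : 0 < b)
    (K : ℝ) (hK : max 1 (b / a) < K)
    (ε : ℕ → ℝ) (hε : ∀ n, ε n = (2:ℝ) ^ (-(K ^ n)))
    (M : ℝ) (hM : 0 ≤ M) (hHbd : ∀ n, ‖H n‖ ≤ M)
    (c : ℝ) (cc : ℕ → ℕ → ℂ)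
    (hcc : ∀ n m : ℕ, 1 ≤ m → m < n →
      ‖(inner ℂ (H n) (H m) : ℂ) - cc n m‖ ≤ M * ε n ^ a * ε m ^ (-b))
    (hlim : ∀ δ : ℝ, 0 < δ → ∃ N₀ : ℕ, ∀ n m : ℕ, N₀ ≤ m → m < n →
      ‖cc n m - (c : ℂ)‖ < δ) :
    Tendsto (fun N : ℕ => ‖(N : ℂ)⁻¹ • ∑ n ∈ Finset.Icc 1 N, H n‖ ^ 2) atTop (𝓝 c) :=
  stmt16_general H a b ha K hK ε hε M hM hHbd c cc hcc hlim
end
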